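/- arXiv:2508.06376 — 5 statements merged into one kernel-verified Lean document; each statement's English description precedes it below -/
import Mathlib

section
/- Body force as a stress divergence (Lemma 2.2): For every smooth orthonormal frame field F = (n1,n2,n3) : ℝ^d → SO(3) (d ∈ {2,3}), there exists a smooth scalar function p̃ : ℝ^d → ℝ such that, for each index i, the body force 𝔉_i := −Σ_{α=1}^3 ∂_i n_α · h_α satisfies, pointwise, 𝔉_i = ∂_j σ^d_{ij} + ∂_i p̃, where σ^d is the elastic stress defined below. -/
open MeasureTheory Real Filter Set Matrix

noncomputable section
namespace FrameHydro

/-- Extended spatial partial derivative: index in `Fin 3`, zero if the index is ≥ d. -/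
def pd (d : ℕ) (i : Fin 3) (f : (Fin d → ℝ) → ℝ) : (Fin d → ℝ) → ℝ :=
  fun x => if h : (i : ℕ) < d then fderiv ℝ f x (Pi.single ⟨(i : ℕ), h⟩ 1) else 0

/-- Spatial partial derivative in direction `i : Fin d`. -/
def pdd (d : ℕ) (i : Fin d) (f : (Fin d → ℝ) → ℝ) : (Fin d → ℝ) → ℝ :=
  fun x => fderiv ℝ f x (Pi.single i 1)

/-- Iterated partial derivative along a finite sequence of directions (a multi-index). -/
def pdSeq (d : ℕ) {m : ℕ} (a : Fin m → Fin d) (f : (Fin d → ℝ) → ℝ) : (Fin d → ℝ) → ℝ :=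
  (List.ofFn a).foldr (pdd d) f

/-- Laplacian. -/
def lap (d : ℕ) (f : (Fin d → ℝ) → ℝ) : (Fin d → ℝ) → ℝ :=
  fun x => ∑ i : Fin d, pdd d i (pdd d i f) x

/-- Iterated Laplacian `Δ^s`. -/
def lapPow (d : ℕ) (s : ℕ) (f : (Fin d → ℝ) → ℝ) : (Fin d → ℝ) → ℝ :=
  (lap d)^[s] f

def dot3 (a b : Fin 3 → ℝ) : ℝ := ∑ k, a k * b k

def div3 (d : ℕ) (u : (Fin d → ℝ) → Fin 3 → ℝ) : (Fin d → ℝ) → ℝ :=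
  fun x => ∑ i : Fin 3, pd d i (fun y => u y i) x

def curl3 (d : ℕ) (u : (Fin d → ℝ) → Fin 3 → ℝ) : (Fin d → ℝ) → Fin 3 → ℝ :=
  fun x k => pd d (k + 1) (fun y => u y (k + 2)) x - pd d (k + 2) (fun y => u y (k + 1)) x

/-- `Δ^s` of an ℝ³-valued field, componentwise. -/
def vlapPow (d : ℕ) (s : ℕ) (u : (Fin d → ℝ) → Fin 3 → ℝ) : (Fin d → ℝ) → Fin 3 → ℝ :=
  fun x m => lapPow d s (fun y => u y m) x

/-- Squared L² norm (over ℝ^d). -/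
def L2sq (d : ℕ) (f : (Fin d → ℝ) → ℝ) : ℝ := ∫ x, (f x) ^ 2

/-- L² norm. -/
def L2n (d : ℕ) (f : (Fin d → ℝ) → ℝ) : ℝ := Real.sqrt (L2sq d f)

/-- L^∞ norm of a scalar field. -/
def Linf (d : ℕ) (f : (Fin d → ℝ) → ℝ) : ℝ := (eLpNorm f ⊤ volume).toReal

/-- L^∞ norm of a field with values in a normed space. -/
def LinfV (d : ℕ) {Y : Type*} [NormedAddCommGroup Y] (f : (Fin d → ℝ) → Y) : ℝ :=
  (eLpNorm f ⊤ volume).toReal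

/-- The orthonormal-frame condition: pointwise orthonormal with `n₃ = n₁ × n₂`. -/
def IsFrame (d : ℕ) (n : Fin 3 → (Fin d → ℝ) → Fin 3 → ℝ) : Prop :=
  ∀ x, (∀ i j, dot3 (n i x) (n j x) = if i = j then 1 else 0) ∧
    n 2 x = crossProduct (n 0 x) (n 1 x)

/-- The Euler–Lagrange field `h_i` associated with a frame field, for general coefficients. -/
def hvec (d : ℕ) (γ kc : Fin 3 → ℝ) (kk : Fin 3 → Fin 3 → ℝ)
    (n : Fin 3 → (Fin d → ℝ) → Fin 3 → ℝ) (i : Fin 3) :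
    (Fin d → ℝ) → Fin 3 → ℝ :=
  fun x m =>
    γ i * lap d (fun y => n i y m) x
    + kc i * pd d m (div3 d (n i)) x
    - ∑ j, kk j i * curl3 d (fun y => dot3 (n j y) (curl3 d (n i) y) • n j y) x m
    - ∑ j, kk i j * dot3 (n i x) (curl3 d (n j) x) * curl3 d (n j) x m

/-- Rotational derivatives `ML_k F_Bi` (0-indexed: `k = 0,1,2` are `ML₁, ML₂, ML₃`). -/
def MLrot (d : ℕ) (γ kc : Fin 3 → ℝ) (kk : Fin 3 → Fin 3 → ℝ)
    (n : Fin 3 → (Fin d → ℝ) → Fin 3 → ℝ) (k : Fin 3) : (Fin d → ℝ) → ℝ :=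
  fun x => dot3 (n (k + 1) x) (hvec d γ kc kk n (k + 2) x)
    - dot3 (n (k + 2) x) (hvec d γ kc kk n (k + 1) x)

/-- The coefficients γ₁, γ₂, γ₃ built from K₁,…,K₁₂ (0-indexed as `K 0, …, K 11`). -/
def γof (K : Fin 12 → ℝ) : Fin 3 → ℝ :=
  ![min (min (K 0) (K 3)) (min (K 6) (K 9)),
    min (min (K 1) (K 4)) (min (K 7) (K 10)),
    min (min (K 2) (K 5)) (min (K 8) (K 11))]

def kcof (K : Fin 12 → ℝ) : Fin 3 → ℝ :=
  ![K 0 - γof K 0, K 1 - γof K 1, K 2 - γof K 2]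

/-- `kkof K i j` is `k_{(i+1)(j+1)}` of the paper. -/
def kkof (K : Fin 12 → ℝ) : Fin 3 → Fin 3 → ℝ :=
  ![![K 3 - γof K 0, K 7 - γof K 1, K 11 - γof K 2],
    ![K 9 - γof K 0, K 4 - γof K 1, K 8 - γof K 2],
    ![K 6 - γof K 0, K 10 - γof K 1, K 5 - γof K 2]]

/-- Convective derivative `(u·∇)w` for ℝ³-valued fields. -/
def convDer (d : ℕ) (u w : (Fin d → ℝ) → Fin 3 → ℝ) : (Fin d → ℝ) → Fin 3 → ℝ :=
  fun x m => ∑ k : Fin 3, u x k * pd d k (fun y => w y m) x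

/-- Null Lagrangian field `(u·∇)u − (div u) u`. -/
def nullLag (d : ℕ) (u : (Fin d → ℝ) → Fin 3 → ℝ) : (Fin d → ℝ) → Fin 3 → ℝ :=
  fun x => convDer d u u x - div3 d u x • u x

/-- The biaxial elastic energy density `f_Bi`. -/
def fBi (d : ℕ) (K : Fin 12 → ℝ) (n : Fin 3 → (Fin d → ℝ) → Fin 3 → ℝ) :
    (Fin d → ℝ) → ℝ := fun x =>
  (1/2) * (K 0 * (div3 d (n 0) x) ^ 2 + K 1 * (div3 d (n 1) x) ^ 2 + K 2 * (div3 d (n 2) x) ^ 2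
    + K 3 * (dot3 (n 0 x) (curl3 d (n 0) x)) ^ 2 + K 4 * (dot3 (n 1 x) (curl3 d (n 1) x)) ^ 2
    + K 5 * (dot3 (n 2 x) (curl3 d (n 2) x)) ^ 2
    + K 6 * (dot3 (n 2 x) (curl3 d (n 0) x)) ^ 2 + K 7 * (dot3 (n 0 x) (curl3 d (n 1) x)) ^ 2
    + K 8 * (dot3 (n 1 x) (curl3 d (n 2) x)) ^ 2
    + K 9 * (dot3 (n 1 x) (curl3 d (n 0) x)) ^ 2 + K 10 * (dot3 (n 2 x) (curl3 d (n 1) x)) ^ 2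
    + K 11 * (dot3 (n 0 x) (curl3 d (n 2) x)) ^ 2
    + γof K 0 * div3 d (nullLag d (n 0)) x
    + γof K 1 * div3 d (nullLag d (n 1)) x
    + γof K 2 * div3 d (nullLag d (n 2)) x)

/-- The biaxial elastic energy `F_Bi[F]`. -/
def FBiE (d : ℕ) (K : Fin 12 → ℝ) (n : Fin 3 → (Fin d → ℝ) → Fin 3 → ℝ) : ℝ :=
  ∫ x, fBi d K n x

abbrev M3 := Matrix (Fin 3) (Fin 3) ℝ

def tensor (a b : Fin 3 → ℝ) : M3 := Matrix.of fun p q => a p * b q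

/-- Frobenius inner product of 3×3 matrices. -/
def mdot (A B : M3) : ℝ := ∑ p, ∑ q, A p q * B p q

def s1T (nv : Fin 3 → Fin 3 → ℝ) : M3 := tensor (nv 0) (nv 0) - (1/3 : ℝ) • (1 : M3)
def s2T (nv : Fin 3 → Fin 3 → ℝ) : M3 := tensor (nv 1) (nv 1) - tensor (nv 2) (nv 2)
def s3T (nv : Fin 3 → Fin 3 → ℝ) : M3 := (1/2 : ℝ) • (tensor (nv 0) (nv 1) + tensor (nv 1) (nv 0))
def s4T (nv : Fin 3 → Fin 3 → ℝ) : M3 := (1/2 : ℝ) • (tensor (nv 0) (nv 2) + tensor (nv 2) (nv 0))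
def s5T (nv : Fin 3 → Fin 3 → ℝ) : M3 := (1/2 : ℝ) • (tensor (nv 1) (nv 2) + tensor (nv 2) (nv 1))
def a1T (nv : Fin 3 → Fin 3 → ℝ) : M3 := tensor (nv 0) (nv 1) - tensor (nv 1) (nv 0)
def a2T (nv : Fin 3 → Fin 3 → ℝ) : M3 := tensor (nv 2) (nv 0) - tensor (nv 0) (nv 2)
def a3T (nv : Fin 3 → Fin 3 → ℝ) : M3 := tensor (nv 1) (nv 2) - tensor (nv 2) (nv 1)

/-- Extension of a d-dimensional velocity field to an ℝ³-valued field (zero padding). -/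
def vext (d : ℕ) (v : (Fin d → ℝ) → Fin d → ℝ) : (Fin d → ℝ) → Fin 3 → ℝ :=
  fun x i => if h : (i : ℕ) < d then v x ⟨(i : ℕ), h⟩ else 0

/-- Velocity gradient, as a 3×3 matrix `(∇v)_{pq} = ∂_q v_p`. -/
def gradV (d : ℕ) (v : (Fin d → ℝ) → Fin d → ℝ) (x : Fin d → ℝ) : M3 :=
  Matrix.of fun p q => pd d q (fun y => vext d v y p) x

/-- Rate-of-strain tensor. -/
def Dm (d : ℕ) (v : (Fin d → ℝ) → Fin d → ℝ) (x : Fin d → ℝ) : M3 :=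
  (1/2 : ℝ) • (gradV d v x + (gradV d v x)ᵀ)

/-- Skew part of the velocity gradient. -/
def Wm (d : ℕ) (v : (Fin d → ℝ) → Fin d → ℝ) (x : Fin d → ℝ) : M3 :=
  (1/2 : ℝ) • (gradV d v x - (gradV d v x)ᵀ)

/-- Divergence-free condition. -/
def DivFree (d : ℕ) (v : (Fin d → ℝ) → Fin d → ℝ) : Prop :=
  ∀ x, ∑ i : Fin d, pdd d i (fun y => v y i) x = 0

/-- The elastic stress σ^d (entries indexed by `Fin 3`, with extended partials). -/
def σd (d : ℕ) (γ kc : Fin 3 → ℝ) (kk : Fin 3 → Fin 3 → ℝ)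
    (n : Fin 3 → (Fin d → ℝ) → Fin 3 → ℝ) (i j : Fin 3) : (Fin d → ℝ) → ℝ := fun x =>
  - (∑ α, γ α * ∑ k, pd d j (fun y => n α y k) x * pd d i (fun y => n α y k) x)
  - (∑ α, kc α * div3 d (n α) x * pd d i (fun y => n α y j) x)
  - ∑ α, ∑ β, kk β α *
      ((∑ p, (pd d j (fun y => n α y p) x - pd d p (fun y => n α y j) x)
          * pd d i (fun y => n α y p) x)
        + (∑ p, ∑ l, n β x j * n β x l
            * (pd d p (fun y => n α y l) x - pd d l (fun y => n α y p) x)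
            * pd d i (fun y => n α y p) x)
        + (∑ p, ∑ l, n β x p * n β x l
            * (pd d l (fun y => n α y j) x - pd d j (fun y => n α y l) x)
            * pd d i (fun y => n α y p) x))

/-- Sobolev regularity of a frame field: all spatial derivatives of order `1, …, m+1`
of the components are in L²  (this encodes `∇F ∈ H^m`). -/
def FrameInH (d m : ℕ) (n : Fin 3 → (Fin d → ℝ) → Fin 3 → ℝ) : Prop :=
  ∀ (k : ℕ), 1 ≤ k → k ≤ m + 1 → ∀ a : Fin k → Fin d, ∀ i mm,
    MemLp (pdSeq d a (fun x => n i x mm)) 2 volume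

/-- Sobolev regularity of a velocity field: `v ∈ H^m`. -/
def VectInH (d m : ℕ) (v : (Fin d → ℝ) → Fin d → ℝ) : Prop :=
  ∀ (k : ℕ), k ≤ m → ∀ a : Fin k → Fin d, ∀ i,
    MemLp (pdSeq d a (fun x => v x i)) 2 volume

/-- Pointwise density of the energy functional `E_s(F,v)`. -/
def esDen (d s : ℕ) (K : Fin 12 → ℝ) (n : Fin 3 → (Fin d → ℝ) → Fin 3 → ℝ)
    (v : (Fin d → ℝ) → Fin d → ℝ) (x : Fin d → ℝ) : ℝ :=
  fBi d K n x + (1/2) * ∑ i : Fin d, (v x i) ^ 2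
    + ∑ i : Fin 3, (1/2) *
        (γof K i * ∑ k : Fin d, ∑ m : Fin 3, (lapPow d s (pdd d k (fun y => n i y m)) x) ^ 2
          + kcof K i * (lapPow d s (div3 d (n i)) x) ^ 2
          + ∑ j, kkof K j i * (dot3 (vlapPow d s (curl3 d (n i)) x) (n j x)) ^ 2)
    + (1/2) * ∑ i : Fin d, (lapPow d s (fun y => v y i) x) ^ 2

/-- The energy functional `E_s(F,v)`. -/
def EnS (d s : ℕ) (K : Fin 12 → ℝ) (n : Fin 3 → (Fin d → ℝ) → Fin 3 → ℝ)
    (v : (Fin d → ℝ) → Fin d → ℝ) : ℝ :=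
  ∫ x, esDen d s K n v x

/-- Pointwise density of the dissipation functional `D_s(F,v)`. -/
def dnDen (d s : ℕ) (K : Fin 12 → ℝ) (η χ1 χ2 χ3 : ℝ)
    (n : Fin 3 → (Fin d → ℝ) → Fin 3 → ℝ) (v : (Fin d → ℝ) → Fin d → ℝ)
    (x : Fin d → ℝ) : ℝ :=
  let γ := min (γof K 0) (min (γof K 1) (γof K 2))
  let χ := max χ1 (max χ2 χ3)
  η * ∑ i : Fin d, ∑ j : Fin d, (pdd d j (fun y => v y i) x) ^ 2
    + (2 * γ ^ 2 / χ) * ∑ i : Fin 3, ∑ m : Fin 3, (lap d (fun y => n i y m) x) ^ 2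
    + (γ ^ 2 / (4 * χ)) * ∑ i : Fin 3, ∑ m : Fin 3, (lapPow d (s + 1) (fun y => n i y m) x) ^ 2
    + η * ∑ i : Fin d, ∑ j : Fin d, (pdd d j (lapPow d s (fun y => v y i)) x) ^ 2

/-- The dissipation functional `D_s(F,v)`. -/
def DnS (d s : ℕ) (K : Fin 12 → ℝ) (η χ1 χ2 χ3 : ℝ)
    (n : Fin 3 → (Fin d → ℝ) → Fin 3 → ℝ) (v : (Fin d → ℝ) → Fin d → ℝ) : ℝ :=
  ∫ x, dnDen d s K η χ1 χ2 χ3 n v x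



/-- Material derivative of an ℝ³-valued time-dependent field. -/
def matDer3 (d : ℕ) (v : (Fin d → ℝ) → Fin d → ℝ)
    (u : ℝ → (Fin d → ℝ) → Fin 3 → ℝ) (t : ℝ) (x : Fin d → ℝ) : Fin 3 → ℝ :=
  fun m => deriv (fun τ => u τ x m) t + ∑ k : Fin 3, vext d v x k * pd d k (fun y => u t y m) x

/-- The three rotation coefficients appearing in the frame evolution equations:
index `0` is `(1/2)W·a3 + (η1/χ1)D·s5 − (1/χ1)ML₁F_Bi`, etc. -/
def rotCoef (d : ℕ) (K : Fin 12 → ℝ) (χ1 χ2 χ3 η1 η2 η3 : ℝ)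
    (n : Fin 3 → (Fin d → ℝ) → Fin 3 → ℝ) (v : (Fin d → ℝ) → Fin d → ℝ)
    (x : Fin d → ℝ) : Fin 3 → ℝ :=
  ![(1/2) * mdot (Wm d v x) (a3T (fun i => n i x))
      + (η1 / χ1) * mdot (Dm d v x) (s5T (fun i => n i x))
      - (1 / χ1) * MLrot d (γof K) (kcof K) (kkof K) n 0 x,
    (1/2) * mdot (Wm d v x) (a2T (fun i => n i x))
      + (η2 / χ2) * mdot (Dm d v x) (s4T (fun i => n i x))
      - (1 / χ2) * MLrot d (γof K) (kcof K) (kkof K) n 1 x,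
    (1/2) * mdot (Wm d v x) (a1T (fun i => n i x))
      + (η3 / χ3) * mdot (Dm d v x) (s3T (fun i => n i x))
      - (1 / χ3) * MLrot d (γof K) (kcof K) (kkof K) n 2 x]

/-- The viscous stress σ, from the frame values `nv`, the material derivatives `ndot`
of the frame, and the symmetric/skew parts `Dx`, `Wx` of the velocity gradient. -/
def σv (χ1 χ2 χ3 β0 β1 β2 β3 β4 β5 η1 η2 η3 : ℝ)
    (nv ndot : Fin 3 → Fin 3 → ℝ) (Dx Wx : M3) : M3 :=
  let q1 := dot3 (ndot 0) (nv 1) - (1/2) * mdot Wx (a1T nv)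
  let q2 := dot3 (ndot 2) (nv 0) - (1/2) * mdot Wx (a2T nv)
  let q3 := dot3 (ndot 1) (nv 2) - (1/2) * mdot Wx (a3T nv)
  (β1 * mdot Dx (s1T nv)) • s1T nv + (β0 * mdot Dx (s2T nv)) • s1T nv
  + (β0 * mdot Dx (s1T nv)) • s2T nv + (β2 * mdot Dx (s2T nv)) • s2T nv
  + (β3 * mdot Dx (s3T nv)) • s3T nv - (η3 * q1) • s3T nv
  + (β4 * mdot Dx (s4T nv)) • s4T nv - (η2 * q2) • s4T nv
  + (β5 * mdot Dx (s5T nv)) • s5T nv - (η1 * q3) • s5T nv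
  + ((1/2) * η3 * mdot Dx (s3T nv)) • a1T nv - ((1/2) * χ3 * q1) • a1T nv
  + ((1/2) * η2 * mdot Dx (s4T nv)) • a2T nv - ((1/2) * χ2 * q2) • a2T nv
  + ((1/2) * η1 * mdot Dx (s5T nv)) • a3T nv - ((1/2) * χ1 * q3) • a3T nv

/-- The full frame hydrodynamics system, at time `t` and point `x`. -/
def SystemAt (d : ℕ) (K : Fin 12 → ℝ)
    (ηv χ1 χ2 χ3 β0 β1 β2 β3 β4 β5 η1 η2 η3 : ℝ)
    (n : Fin 3 → ℝ → (Fin d → ℝ) → Fin 3 → ℝ)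
    (v : ℝ → (Fin d → ℝ) → Fin d → ℝ) (pr : ℝ → (Fin d → ℝ) → ℝ)
    (t : ℝ) (x : Fin d → ℝ) : Prop :=
  (matDer3 d (v t) (n 0) t x
      = rotCoef d K χ1 χ2 χ3 η1 η2 η3 (fun i => n i t) (v t) x 2 • n 1 t x
        - rotCoef d K χ1 χ2 χ3 η1 η2 η3 (fun i => n i t) (v t) x 1 • n 2 t x) ∧
  (matDer3 d (v t) (n 1) t x
      = rotCoef d K χ1 χ2 χ3 η1 η2 η3 (fun i => n i t) (v t) x 0 • n 2 t x
        - rotCoef d K χ1 χ2 χ3 η1 η2 η3 (fun i => n i t) (v t) x 2 • n 0 t x) ∧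
  (matDer3 d (v t) (n 2) t x
      = rotCoef d K χ1 χ2 χ3 η1 η2 η3 (fun i => n i t) (v t) x 1 • n 0 t x
        - rotCoef d K χ1 χ2 χ3 η1 η2 η3 (fun i => n i t) (v t) x 0 • n 1 t x) ∧
  (∀ i : Fin 3, ∀ h : (i : ℕ) < d,
    deriv (fun τ => v τ x ⟨(i : ℕ), h⟩) t
        + ∑ k : Fin 3, vext d (v t) x k * pd d k (fun y => vext d (v t) y i) x
      = - pd d i (pr t) x + ηv * lap d (fun y => vext d (v t) y i) x
        + ∑ j : Fin 3, pd d j (fun y =>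
            σv χ1 χ2 χ3 β0 β1 β2 β3 β4 β5 η1 η2 η3 (fun a => n a t y)
              (fun a => matDer3 d (v t) (n a) t y) (Dm d (v t) y) (Wm d (v t) y) i j
            + σd d (γof K) (kcof K) (kkof K) (fun a => n a t) i j y) x) ∧
  (∑ i : Fin d, pdd d i (fun y => v t y i) x = 0)

/-- Joint space-time smoothness of the solution. -/
def SmoothSol (d : ℕ) (n : Fin 3 → ℝ → (Fin d → ℝ) → Fin 3 → ℝ)
    (v : ℝ → (Fin d → ℝ) → Fin d → ℝ) (pr : ℝ → (Fin d → ℝ) → ℝ) : Prop :=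
  (∀ i, ContDiff ℝ (⊤ : ℕ∞) (fun q : ℝ × (Fin d → ℝ) => n i q.1 q.2)) ∧
  ContDiff ℝ (⊤ : ℕ∞) (fun q : ℝ × (Fin d → ℝ) => v q.1 q.2) ∧
  ContDiff ℝ (⊤ : ℕ∞) (fun q : ℝ × (Fin d → ℝ) => pr q.1 q.2)

/-- Squared `H^m` norm of `∇F` (all derivatives of the frame of orders `1,…,m+1`). -/
def frameGradHSq (d m : ℕ) (n : Fin 3 → (Fin d → ℝ) → Fin 3 → ℝ) : ℝ :=
  ∑ k ∈ Finset.Icc 1 (m + 1), ∑ i : Fin 3, ∑ mm : Fin 3,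
    ∑ a : Fin k → Fin d, L2sq d (pdSeq d a (fun x => n i x mm))

/-- Squared `H^m` norm of a velocity field. -/
def vectHSq (d m : ℕ) (v : (Fin d → ℝ) → Fin d → ℝ) : ℝ :=
  ∑ k ∈ Finset.range (m + 1), ∑ i : Fin d,
    ∑ a : Fin k → Fin d, L2sq d (pdSeq d a (fun x => v x i))

/-- `∇F ∈ C([0,T]; H^m)`. -/
def FrameContH (d m : ℕ) (T : ℝ) (n : Fin 3 → ℝ → (Fin d → ℝ) → Fin 3 → ℝ) : Prop :=
  (∀ t ∈ Set.Icc (0 : ℝ) T, FrameInH d m (fun i => n i t)) ∧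
  ∀ t0 ∈ Set.Icc (0 : ℝ) T,
    Filter.Tendsto (fun t => frameGradHSq d m (fun i x mm => n i t x mm - n i t0 x mm))
      (nhdsWithin t0 (Set.Icc 0 T)) (nhds 0)

/-- `v ∈ C([0,T]; H^m)`. -/
def VectContH (d m : ℕ) (T : ℝ) (v : ℝ → (Fin d → ℝ) → Fin d → ℝ) : Prop :=
  (∀ t ∈ Set.Icc (0 : ℝ) T, VectInH d m (v t)) ∧
  ∀ t0 ∈ Set.Icc (0 : ℝ) T,
    Filter.Tendsto (fun t => vectHSq d m (fun x i => v t x i - v t0 x i))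
      (nhdsWithin t0 (Set.Icc 0 T)) (nhds 0)

/-- `(F,v,p)` is a strong solution of the frame hydrodynamics system on `[0,T]` with
initial data `(n0, v0)`, in the regularity class of Theorem 1.1. -/
def IsStrongSolOn (d s : ℕ) (K : Fin 12 → ℝ)
    (ηv χ1 χ2 χ3 β0 β1 β2 β3 β4 β5 η1 η2 η3 : ℝ) (T : ℝ)
    (n0 : Fin 3 → (Fin d → ℝ) → Fin 3 → ℝ) (v0 : (Fin d → ℝ) → Fin d → ℝ)
    (n : Fin 3 → ℝ → (Fin d → ℝ) → Fin 3 → ℝ)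
    (v : ℝ → (Fin d → ℝ) → Fin d → ℝ) (pr : ℝ → (Fin d → ℝ) → ℝ) : Prop :=
  (∀ i, n i 0 = n0 i) ∧ (v 0 = v0) ∧
  (∀ t ∈ Set.Icc (0 : ℝ) T, IsFrame d (fun i => n i t)) ∧
  (∀ t ∈ Set.Icc (0 : ℝ) T, ∀ x,
    SystemAt d K ηv χ1 χ2 χ3 β0 β1 β2 β3 β4 β5 η1 η2 η3 n v pr t x) ∧
  FrameContH d (2 * s) T n ∧ VectContH d (2 * s) T v ∧
  (∀ t ∈ Set.Icc (0 : ℝ) T, VectInH d (2 * s + 1) (v t)) ∧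
  MeasureTheory.IntegrableOn (fun t => vectHSq d (2 * s + 1) (v t)) (Set.Icc 0 T)

end FrameHydro

namespace FrameHydro

section BodyForceAux

@[fun_prop] lemma contDiff_pd {d : ℕ} (i : Fin 3) (f : (Fin d → ℝ) → ℝ)
    (hf : ContDiff ℝ (⊤ : ℕ∞) f) : ContDiff ℝ (⊤ : ℕ∞) (pd d i f) := by
  unfold pd
  by_cases h : (i : ℕ) < d
  · simp only [h, dif_pos]
    exact (hf.fderiv_right (by simp)).clm_apply contDiff_const
  · simp only [h, dif_neg, not_false_iff]
    exact contDiff_const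

@[fun_prop] lemma contDiff_sum3 {d : ℕ} (F : Fin 3 → (Fin d → ℝ) → ℝ)
    (hf : ∀ k, ContDiff ℝ (⊤ : ℕ∞) (F k)) : ContDiff ℝ (⊤ : ℕ∞) (fun y => ∑ k : Fin 3, F k y) :=
  ContDiff.sum (fun k _ => hf k)

variable {d : ℕ} {f g : (Fin d → ℝ) → ℝ} {x : Fin d → ℝ}

lemma pd_add (i : Fin 3) (hf : ContDiff ℝ (⊤ : ℕ∞) f) (hg : ContDiff ℝ (⊤ : ℕ∞) g) :
    pd d i (fun y => f y + g y) x = pd d i f x + pd d i g x := by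
  unfold pd
  by_cases h : (i : ℕ) < d
  · simp only [h, dif_pos]
    rw [fderiv_fun_add (hf.differentiable (by simp) x) (hg.differentiable (by simp) x)]
    simp
  · simp [h]

lemma pd_mul (i : Fin 3) (hf : ContDiff ℝ (⊤ : ℕ∞) f) (hg : ContDiff ℝ (⊤ : ℕ∞) g) :
    pd d i (fun y => f y * g y) x = f x * pd d i g x + g x * pd d i f x := by
  unfold pd
  by_cases h : (i : ℕ) < d
  · simp only [h, dif_pos]
    rw [fderiv_fun_mul (hf.differentiable (by simp) x) (hg.differentiable (by simp) x)]
    simp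
  · simp [h]

lemma pd_neg (i : Fin 3) : pd d i (fun y => -f y) x = -pd d i f x := by
  unfold pd
  by_cases h : (i : ℕ) < d
  · simp only [h, dif_pos, fderiv_neg]; simp
  · simp [h]

lemma pd_sub (i : Fin 3) (hf : ContDiff ℝ (⊤ : ℕ∞) f) (hg : ContDiff ℝ (⊤ : ℕ∞) g) :
    pd d i (fun y => f y - g y) x = pd d i f x - pd d i g x := by
  unfold pd
  by_cases h : (i : ℕ) < d
  · simp only [h, dif_pos]
    rw [fderiv_fun_sub (hf.differentiable (by simp) x) (hg.differentiable (by simp) x)]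
    simp
  · simp [h]

lemma pd_const (i : Fin 3) (c : ℝ) : pd d i (fun _ => c) x = 0 := by
  unfold pd
  by_cases h : (i : ℕ) < d <;> simp [h]

lemma pd_cmul (i : Fin 3) (c : ℝ) (hf : ContDiff ℝ (⊤ : ℕ∞) f) :
    pd d i (fun y => c * f y) x = c * pd d i f x := by
  unfold pd
  by_cases h : (i : ℕ) < d
  · simp only [h, dif_pos]
    rw [fderiv_const_mul (hf.differentiable (by simp) x)]
    simp
  · simp [h]

lemma pd_zero_of_ge (i : Fin 3) (h : ¬ ((i : ℕ) < d)) (f : (Fin d → ℝ) → ℝ) :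
    pd d i f = fun _ => 0 := by
  unfold pd; funext x; simp [h]

lemma pd_comm (i j : Fin 3) (hf : ContDiff ℝ (⊤ : ℕ∞) f) :
    pd d i (pd d j f) x = pd d j (pd d i f) x := by
  by_cases hi : (i : ℕ) < d
  · by_cases hj : (j : ℕ) < d
    · have key : ∀ v w, fderiv ℝ (fun y => fderiv ℝ f y v) x w
          = fderiv ℝ (fun y => fderiv ℝ f y w) x v := by
        intro v w
        have h1 : fderiv ℝ (fun y => fderiv ℝ f y v) x w = fderiv ℝ (fderiv ℝ f) x w v := by
          rw [fderiv_clm_apply ((hf.fderiv_right (m := (⊤ : ℕ∞)) (by simp)).differentiable (by simp) x)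
            (differentiableAt_const v)]
          simp
        have h2 : fderiv ℝ (fun y => fderiv ℝ f y w) x v = fderiv ℝ (fderiv ℝ f) x v w := by
          rw [fderiv_clm_apply ((hf.fderiv_right (m := (⊤ : ℕ∞)) (by simp)).differentiable (by simp) x)
            (differentiableAt_const w)]
          simp
        rw [h1, h2]
        exact (hf.contDiffAt.isSymmSndFDerivAt (by rw [minSmoothness_of_isRCLikeNormedField]; exact WithTop.coe_le_coe.mpr le_top)) w v
      show pd d i (pd d j f) x = pd d j (pd d i f) x
      unfold pd
      simp only [hi, hj, dif_pos]
      exact key _ _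
    · rw [pd_zero_of_ge j hj f, pd_zero_of_ge j hj (pd d i f)]
      have : pd d i (fun _ : Fin d → ℝ => (0:ℝ)) x = 0 := pd_const i 0
      simpa using this
  · rw [pd_zero_of_ge i hi f, pd_zero_of_ge i hi (pd d j f)]
    have : pd d j (fun _ : Fin d → ℝ => (0:ℝ)) x = 0 := pd_const j 0
    simpa using this.symm

lemma pdd_eq_pd2 (f : (Fin 2 → ℝ) → ℝ) (i : Fin 2) (j : Fin 3) (h : (j : ℕ) = (i : ℕ)) :
    pdd 2 i f = pd 2 j f := by
  funext y
  have hj : (j : ℕ) < 2 := by omega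
  simp only [pdd, pd, hj, dif_pos]
  congr 1
  ext k
  rcases k with ⟨kv, hk⟩
  simp only [Pi.single_apply]
  congr 1
  simp [Fin.ext_iff, h]

lemma pdd_eq_pd3 (f : (Fin 3 → ℝ) → ℝ) (i : Fin 3) (j : Fin 3) (h : (j : ℕ) = (i : ℕ)) :
    pdd 3 i f = pd 3 j f := by
  funext y
  have hj : (j : ℕ) < 3 := by omega
  simp only [pdd, pd, hj, dif_pos]
  congr 1
  ext k
  rcases k with ⟨kv, hk⟩
  simp only [Pi.single_apply]
  congr 1
  simp [Fin.ext_iff, h]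

lemma lap_eq_sum3 (hd : d = 2 ∨ d = 3) (f : (Fin d → ℝ) → ℝ) (x : Fin d → ℝ) :
    lap d f x = ∑ i : Fin 3, pd d i (pd d i f) x := by
  rcases hd with h | h <;> subst h
  · have h2 : ¬ (((2 : Fin 3) : ℕ) < 2) := by norm_num
    show ∑ i : Fin 2, pdd 2 i (pdd 2 i f) x = _
    rw [Fin.sum_univ_two, Fin.sum_univ_three,
      pdd_eq_pd2 f 0 0 rfl, pdd_eq_pd2 _ 0 0 rfl, pdd_eq_pd2 f 1 1 rfl, pdd_eq_pd2 _ 1 1 rfl,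
      pd_zero_of_ge (2 : Fin 3) h2 (pd 2 2 f)]
    simp
  · show ∑ i : Fin 3, pdd 3 i (pdd 3 i f) x = _
    rw [Fin.sum_univ_three, Fin.sum_univ_three,
      pdd_eq_pd3 f 0 0 rfl, pdd_eq_pd3 _ 0 0 rfl, pdd_eq_pd3 f 1 1 rfl, pdd_eq_pd3 _ 1 1 rfl,
      pdd_eq_pd3 f 2 2 rfl, pdd_eq_pd3 _ 2 2 rfl]

end BodyForceAux

section BodyForcePieces

variable {d : ℕ}

def Tgam (d : ℕ) (u : (Fin d → ℝ) → Fin 3 → ℝ) (i j : Fin 3) : (Fin d → ℝ) → ℝ :=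
  fun y => ∑ k : Fin 3, pd d j (fun z => u z k) y * pd d i (fun z => u z k) y

def Tkc (d : ℕ) (u : (Fin d → ℝ) → Fin 3 → ℝ) (i j : Fin 3) : (Fin d → ℝ) → ℝ :=
  fun y => div3 d u y * pd d i (fun z => u z j) y

def Tkk (d : ℕ) (v u : (Fin d → ℝ) → Fin 3 → ℝ) (i j : Fin 3) : (Fin d → ℝ) → ℝ :=
  fun y =>
    (∑ p : Fin 3, (pd d j (fun z => u z p) y - pd d p (fun z => u z j) y)
        * pd d i (fun z => u z p) y)
    + (∑ p : Fin 3, ∑ l : Fin 3, v y j * v y l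
        * (pd d p (fun z => u z l) y - pd d l (fun z => u z p) y)
        * pd d i (fun z => u z p) y)
    + (∑ p : Fin 3, ∑ l : Fin 3, v y p * v y l
        * (pd d l (fun z => u z j) y - pd d j (fun z => u z l) y)
        * pd d i (fun z => u z p) y)

def Egam (d : ℕ) (u : (Fin d → ℝ) → Fin 3 → ℝ) : (Fin d → ℝ) → ℝ :=
  fun x => ∑ j : Fin 3, ∑ m : Fin 3, pd d j (fun z => u z m) x * pd d j (fun z => u z m) x

def Ekc (d : ℕ) (u : (Fin d → ℝ) → Fin 3 → ℝ) : (Fin d → ℝ) → ℝ :=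
  fun x => div3 d u x * div3 d u x

def Ekk (d : ℕ) (v u : (Fin d → ℝ) → Fin 3 → ℝ) : (Fin d → ℝ) → ℝ :=
  fun x => dot3 (v x) (curl3 d u x) * dot3 (v x) (curl3 d u x)

def VLgam (d : ℕ) (u : (Fin d → ℝ) → Fin 3 → ℝ) (i : Fin 3) (x : Fin d → ℝ) : ℝ :=
  -∑ m : Fin 3, pd d i (fun y => u y m) x * lap d (fun y => u y m) x

def VLkc (d : ℕ) (u : (Fin d → ℝ) → Fin 3 → ℝ) (i : Fin 3) (x : Fin d → ℝ) : ℝ :=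
  -∑ m : Fin 3, pd d i (fun y => u y m) x * pd d m (div3 d u) x

def VLkk (d : ℕ) (v u : (Fin d → ℝ) → Fin 3 → ℝ) (i : Fin 3) (x : Fin d → ℝ) : ℝ :=
  (∑ m : Fin 3, pd d i (fun y => u y m) x
      * curl3 d (fun y => dot3 (v y) (curl3 d u y) • v y) x m)
  + dot3 (v x) (curl3 d u x) * ∑ m : Fin 3, pd d i (fun y => v y m) x * curl3 d u x m

def VSgam (d : ℕ) (u : (Fin d → ℝ) → Fin 3 → ℝ) (i : Fin 3) (x : Fin d → ℝ) : ℝ :=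
  -∑ j : Fin 3, pd d j (Tgam d u i j) x

def VSkc (d : ℕ) (u : (Fin d → ℝ) → Fin 3 → ℝ) (i : Fin 3) (x : Fin d → ℝ) : ℝ :=
  -∑ j : Fin 3, pd d j (Tkc d u i j) x

def VSkk (d : ℕ) (v u : (Fin d → ℝ) → Fin 3 → ℝ) (i : Fin 3) (x : Fin d → ℝ) : ℝ :=
  -∑ j : Fin 3, pd d j (Tkk d v u i j) x

lemma contDiff_comp3 (u : (Fin d → ℝ) → Fin 3 → ℝ) (hu : ContDiff ℝ (⊤ : ℕ∞) u)
    (m : Fin 3) : ContDiff ℝ (⊤ : ℕ∞) (fun y => u y m) := contDiff_pi.1 hu m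

@[fun_prop] lemma contDiff_div3 (u : (Fin d → ℝ) → Fin 3 → ℝ) (hu : ContDiff ℝ (⊤ : ℕ∞) u) :
    ContDiff ℝ (⊤ : ℕ∞) (div3 d u) := by unfold div3; fun_prop

@[fun_prop] lemma contDiff_curl3_app (u : (Fin d → ℝ) → Fin 3 → ℝ) (hu : ContDiff ℝ (⊤ : ℕ∞) u)
    (k : Fin 3) : ContDiff ℝ (⊤ : ℕ∞) (fun x => curl3 d u x k) := by unfold curl3; fun_prop

@[fun_prop] lemma contDiff_Tgam (u : (Fin d → ℝ) → Fin 3 → ℝ) (hu : ContDiff ℝ (⊤ : ℕ∞) u)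
    (i j : Fin 3) : ContDiff ℝ (⊤ : ℕ∞) (Tgam d u i j) := by unfold Tgam; fun_prop

@[fun_prop] lemma contDiff_Tkc (u : (Fin d → ℝ) → Fin 3 → ℝ) (hu : ContDiff ℝ (⊤ : ℕ∞) u)
    (i j : Fin 3) : ContDiff ℝ (⊤ : ℕ∞) (Tkc d u i j) := by unfold Tkc; fun_prop

@[fun_prop] lemma contDiff_Tkk (v u : (Fin d → ℝ) → Fin 3 → ℝ) (hv : ContDiff ℝ (⊤ : ℕ∞) v)
    (hu : ContDiff ℝ (⊤ : ℕ∞) u) (i j : Fin 3) : ContDiff ℝ (⊤ : ℕ∞) (Tkk d v u i j) := by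
  unfold Tkk; fun_prop

@[fun_prop] lemma contDiff_Egam (u : (Fin d → ℝ) → Fin 3 → ℝ) (hu : ContDiff ℝ (⊤ : ℕ∞) u) :
    ContDiff ℝ (⊤ : ℕ∞) (Egam d u) := by unfold Egam; fun_prop

@[fun_prop] lemma contDiff_Ekc (u : (Fin d → ℝ) → Fin 3 → ℝ) (hu : ContDiff ℝ (⊤ : ℕ∞) u) :
    ContDiff ℝ (⊤ : ℕ∞) (Ekc d u) := by unfold Ekc; fun_prop

@[fun_prop] lemma contDiff_Ekk (v u : (Fin d → ℝ) → Fin 3 → ℝ) (hv : ContDiff ℝ (⊤ : ℕ∞) v)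
    (hu : ContDiff ℝ (⊤ : ℕ∞) u) : ContDiff ℝ (⊤ : ℕ∞) (Ekk d v u) := by
  unfold Ekk dot3; fun_prop


lemma div3_def (d : ℕ) (u : (Fin d → ℝ) → Fin 3 → ℝ) :
    div3 d u = fun x => ∑ i : Fin 3, pd d i (fun y => u y i) x := rfl
lemma Tgam_def (d : ℕ) (u : (Fin d → ℝ) → Fin 3 → ℝ) (i j : Fin 3) :
    Tgam d u i j = fun y => ∑ k : Fin 3, pd d j (fun z => u z k) y * pd d i (fun z => u z k) y := rfl
lemma Tkk_def (d : ℕ) (v u : (Fin d → ℝ) → Fin 3 → ℝ) (i j : Fin 3) :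
    Tkk d v u i j = fun y =>
      (∑ p : Fin 3, (pd d j (fun z => u z p) y - pd d p (fun z => u z j) y)
          * pd d i (fun z => u z p) y)
      + (∑ p : Fin 3, ∑ l : Fin 3, v y j * v y l
          * (pd d p (fun z => u z l) y - pd d l (fun z => u z p) y)
          * pd d i (fun z => u z p) y)
      + (∑ p : Fin 3, ∑ l : Fin 3, v y p * v y l
          * (pd d l (fun z => u z j) y - pd d j (fun z => u z l) y)
          * pd d i (fun z => u z p) y) := rfl
lemma Tkc_def (d : ℕ) (u : (Fin d → ℝ) → Fin 3 → ℝ) (i j : Fin 3) :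
    Tkc d u i j = fun y => div3 d u y * pd d i (fun z => u z j) y := rfl
lemma Egam_def (d : ℕ) (u : (Fin d → ℝ) → Fin 3 → ℝ) :
    Egam d u = fun x => ∑ j : Fin 3, ∑ m : Fin 3, pd d j (fun z => u z m) x * pd d j (fun z => u z m) x := rfl
lemma Ekc_def (d : ℕ) (u : (Fin d → ℝ) → Fin 3 → ℝ) :
    Ekc d u = fun x => div3 d u x * div3 d u x := rfl
lemma Ekk_def (d : ℕ) (v u : (Fin d → ℝ) → Fin 3 → ℝ) :
    Ekk d v u = fun x => dot3 (v x) (curl3 d u x) * dot3 (v x) (curl3 d u x) := rfl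


lemma piece_gam0 (hd : d = 2 ∨ d = 3) (u : (Fin d → ℝ) → Fin 3 → ℝ) (hu : ContDiff ℝ (⊤ : ℕ∞) u)
    (x : Fin d → ℝ) :
    VLgam d u 0 x = VSgam d u 0 x + (1/2 : ℝ) * pd d 0 (Egam d u) x := by
  have H : ∀ (j k : Fin 3) (m : Fin 3), pd d j (pd d k (fun y => u y m)) x
      = pd d k (pd d j (fun y => u y m)) x := fun j k m =>
    pd_comm j k (contDiff_comp3 u hu m)
  simp (disch := fun_prop) only [VLgam, VSgam, Tgam_def, Egam_def, lap_eq_sum3 hd,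
      Fin.sum_univ_three, pd_add, pd_mul, pd_const]
  simp only [H 1 0, H 2 0, H 2 1]
  ring

lemma piece_gam1 (hd : d = 2 ∨ d = 3) (u : (Fin d → ℝ) → Fin 3 → ℝ) (hu : ContDiff ℝ (⊤ : ℕ∞) u)
    (x : Fin d → ℝ) :
    VLgam d u 1 x = VSgam d u 1 x + (1/2 : ℝ) * pd d 1 (Egam d u) x := by
  have H : ∀ (j k : Fin 3) (m : Fin 3), pd d j (pd d k (fun y => u y m)) x
      = pd d k (pd d j (fun y => u y m)) x := fun j k m =>
    pd_comm j k (contDiff_comp3 u hu m)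
  simp (disch := fun_prop) only [VLgam, VSgam, Tgam_def, Egam_def, lap_eq_sum3 hd,
      Fin.sum_univ_three, pd_add, pd_mul, pd_const]
  simp only [H 1 0, H 2 0, H 2 1]
  ring

lemma piece_gam2 (hd : d = 2 ∨ d = 3) (u : (Fin d → ℝ) → Fin 3 → ℝ) (hu : ContDiff ℝ (⊤ : ℕ∞) u)
    (x : Fin d → ℝ) :
    VLgam d u 2 x = VSgam d u 2 x + (1/2 : ℝ) * pd d 2 (Egam d u) x := by
  have H : ∀ (j k : Fin 3) (m : Fin 3), pd d j (pd d k (fun y => u y m)) x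
      = pd d k (pd d j (fun y => u y m)) x := fun j k m =>
    pd_comm j k (contDiff_comp3 u hu m)
  simp (disch := fun_prop) only [VLgam, VSgam, Tgam_def, Egam_def, lap_eq_sum3 hd,
      Fin.sum_univ_three, pd_add, pd_mul, pd_const]
  simp only [H 1 0, H 2 0, H 2 1]
  ring

lemma piece_gam (hd : d = 2 ∨ d = 3) (u : (Fin d → ℝ) → Fin 3 → ℝ) (hu : ContDiff ℝ (⊤ : ℕ∞) u)
    (i : Fin 3) (x : Fin d → ℝ) :
    VLgam d u i x = VSgam d u i x + (1/2 : ℝ) * pd d i (Egam d u) x := by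
  fin_cases i
  · exact piece_gam0 hd u hu x
  · exact piece_gam1 hd u hu x
  · exact piece_gam2 hd u hu x


lemma piece_kc0 (u : (Fin d → ℝ) → Fin 3 → ℝ) (hu : ContDiff ℝ (⊤ : ℕ∞) u) (x : Fin d → ℝ) :
    VLkc d u 0 x = VSkc d u 0 x + (1/2 : ℝ) * pd d 0 (Ekc d u) x := by
  have H : ∀ (j k : Fin 3) (m : Fin 3), pd d j (pd d k (fun y => u y m)) x
      = pd d k (pd d j (fun y => u y m)) x := fun j k m =>
    pd_comm j k (contDiff_comp3 u hu m)
  simp (disch := fun_prop) only [VLkc, VSkc, Tkc_def, Ekc_def, div3_def, Fin.sum_univ_three,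
      pd_add, pd_mul, pd_sub, pd_const]
  simp only [H 1 0, H 2 0, H 2 1]
  ring

lemma piece_kc1 (u : (Fin d → ℝ) → Fin 3 → ℝ) (hu : ContDiff ℝ (⊤ : ℕ∞) u) (x : Fin d → ℝ) :
    VLkc d u 1 x = VSkc d u 1 x + (1/2 : ℝ) * pd d 1 (Ekc d u) x := by
  have H : ∀ (j k : Fin 3) (m : Fin 3), pd d j (pd d k (fun y => u y m)) x
      = pd d k (pd d j (fun y => u y m)) x := fun j k m =>
    pd_comm j k (contDiff_comp3 u hu m)
  simp (disch := fun_prop) only [VLkc, VSkc, Tkc_def, Ekc_def, div3_def, Fin.sum_univ_three,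
      pd_add, pd_mul, pd_sub, pd_const]
  simp only [H 1 0, H 2 0, H 2 1]
  ring

lemma piece_kc2 (u : (Fin d → ℝ) → Fin 3 → ℝ) (hu : ContDiff ℝ (⊤ : ℕ∞) u) (x : Fin d → ℝ) :
    VLkc d u 2 x = VSkc d u 2 x + (1/2 : ℝ) * pd d 2 (Ekc d u) x := by
  have H : ∀ (j k : Fin 3) (m : Fin 3), pd d j (pd d k (fun y => u y m)) x
      = pd d k (pd d j (fun y => u y m)) x := fun j k m =>
    pd_comm j k (contDiff_comp3 u hu m)
  simp (disch := fun_prop) only [VLkc, VSkc, Tkc_def, Ekc_def, div3_def, Fin.sum_univ_three,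
      pd_add, pd_mul, pd_sub, pd_const]
  simp only [H 1 0, H 2 0, H 2 1]
  ring

lemma piece_kc (u : (Fin d → ℝ) → Fin 3 → ℝ) (hu : ContDiff ℝ (⊤ : ℕ∞) u)
    (i : Fin 3) (x : Fin d → ℝ) :
    VLkc d u i x = VSkc d u i x + (1/2 : ℝ) * pd d i (Ekc d u) x := by
  fin_cases i
  · exact piece_kc0 u hu x
  · exact piece_kc1 u hu x
  · exact piece_kc2 u hu x


set_option maxHeartbeats 4000000 in
lemma piece_kk0 (v u : (Fin d → ℝ) → Fin 3 → ℝ) (hv : ContDiff ℝ (⊤ : ℕ∞) v) (hu : ContDiff ℝ (⊤ : ℕ∞) u)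
    (hvu : ∀ y, dot3 (v y) (v y) = 1) (x : Fin d → ℝ) :
    VLkk d v u 0 x = VSkk d v u 0 x + (1/2 : ℝ) * pd d 0 (Ekk d v u) x := by
  have H : ∀ (j k : Fin 3) (m : Fin 3), pd d j (pd d k (fun y => u y m)) x
      = pd d k (pd d j (fun y => u y m)) x := fun j k m =>
    pd_comm j k (contDiff_comp3 u hu m)
  have hC0 : v x 0 * v x 0 + v x 1 * v x 1 + v x 2 * v x 2 = 1 := by
    simpa [dot3, Fin.sum_univ_three] using hvu x
  have hvfun : (fun y => v y 0 * v y 0 + v y 1 * v y 1 + v y 2 * v y 2) = (fun _ => (1:ℝ)) := by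
    funext y
    simpa [dot3, Fin.sum_univ_three] using hvu y
  have hC1 : ∀ j : Fin 3, v x 0 * pd d j (fun y => v y 0) x + v x 1 * pd d j (fun y => v y 1) x
      + v x 2 * pd d j (fun y => v y 2) x = 0 := by
    intro j
    have hd1 := congrArg (fun f => pd d j f x) hvfun
    simp (disch := fun_prop) only [pd_add, pd_mul, pd_const] at hd1
    linear_combination hd1 / 2
  simp only [VLkk, VSkk, Tkk_def, Ekk_def, curl3, dot3, Pi.smul_apply,
      smul_eq_mul, Fin.sum_univ_three, Fin.reduceAdd]
  simp (disch := fun_prop) only [pd_add, pd_sub, pd_mul, pd_cmul, pd_const]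
  simp only [H 1 0, H 2 0, H 2 1]
  linear_combination ((-2 : ℝ) * pd d 0 (fun y => u y 1) x * pd d 0 (fun y => u y 1) x
      + (2 : ℝ) * pd d 0 (fun y => u y 1) x * pd d 1 (fun y => u y 0) x
      + (-2 : ℝ) * pd d 0 (fun y => u y 2) x * pd d 0 (fun y => u y 2) x
      + (2 : ℝ) * pd d 0 (fun y => u y 2) x * pd d 2 (fun y => u y 0) x) * hC1 0
    + ((2 : ℝ) * pd d 0 (fun y => u y 0) x * pd d 0 (fun y => u y 1) x
      + (-2 : ℝ) * pd d 0 (fun y => u y 0) x * pd d 1 (fun y => u y 0) x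
      + (-2 : ℝ) * pd d 0 (fun y => u y 2) x * pd d 1 (fun y => u y 2) x
      + (2 : ℝ) * pd d 0 (fun y => u y 2) x * pd d 2 (fun y => u y 1) x) * hC1 1
    + ((2 : ℝ) * pd d 0 (fun y => u y 0) x * pd d 0 (fun y => u y 2) x
      + (-2 : ℝ) * pd d 0 (fun y => u y 0) x * pd d 2 (fun y => u y 0) x
      + (2 : ℝ) * pd d 0 (fun y => u y 1) x * pd d 1 (fun y => u y 2) x
      + (-2 : ℝ) * pd d 0 (fun y => u y 1) x * pd d 2 (fun y => u y 1) x) * hC1 2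
    + ((-2 : ℝ) * pd d 0 (pd d 0 (fun y => u y 1)) x * pd d 0 (fun y => u y 1) x
      + (1 : ℝ) * pd d 0 (pd d 0 (fun y => u y 1)) x * pd d 1 (fun y => u y 0) x
      + (-2 : ℝ) * pd d 0 (pd d 0 (fun y => u y 2)) x * pd d 0 (fun y => u y 2) x
      + (1 : ℝ) * pd d 0 (pd d 0 (fun y => u y 2)) x * pd d 2 (fun y => u y 0) x
      + (2 : ℝ) * pd d 0 (pd d 1 (fun y => u y 0)) x * pd d 0 (fun y => u y 1) x
      + (-1 : ℝ) * pd d 0 (pd d 1 (fun y => u y 0)) x * pd d 1 (fun y => u y 0) x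
      + (1 : ℝ) * pd d 0 (pd d 1 (fun y => u y 1)) x * pd d 0 (fun y => u y 0) x
      + (-1 : ℝ) * pd d 0 (pd d 1 (fun y => u y 2)) x * pd d 1 (fun y => u y 2) x
      + (1 : ℝ) * pd d 0 (pd d 1 (fun y => u y 2)) x * pd d 2 (fun y => u y 1) x
      + (2 : ℝ) * pd d 0 (pd d 2 (fun y => u y 0)) x * pd d 0 (fun y => u y 2) x
      + (-1 : ℝ) * pd d 0 (pd d 2 (fun y => u y 0)) x * pd d 2 (fun y => u y 0) x
      + (1 : ℝ) * pd d 0 (pd d 2 (fun y => u y 1)) x * pd d 1 (fun y => u y 2) x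
      + (-1 : ℝ) * pd d 0 (pd d 2 (fun y => u y 1)) x * pd d 2 (fun y => u y 1) x
      + (1 : ℝ) * pd d 0 (pd d 2 (fun y => u y 2)) x * pd d 0 (fun y => u y 0) x
      + (-1 : ℝ) * pd d 1 (pd d 1 (fun y => u y 0)) x * pd d 0 (fun y => u y 0) x
      + (-1 : ℝ) * pd d 1 (pd d 1 (fun y => u y 2)) x * pd d 0 (fun y => u y 2) x
      + (1 : ℝ) * pd d 1 (pd d 2 (fun y => u y 1)) x * pd d 0 (fun y => u y 2) x
      + (1 : ℝ) * pd d 1 (pd d 2 (fun y => u y 2)) x * pd d 0 (fun y => u y 1) x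
      + (-1 : ℝ) * pd d 2 (pd d 2 (fun y => u y 0)) x * pd d 0 (fun y => u y 0) x
      + (-1 : ℝ) * pd d 2 (pd d 2 (fun y => u y 1)) x * pd d 0 (fun y => u y 1) x) * hC0

set_option maxHeartbeats 4000000 in
lemma piece_kk1 (v u : (Fin d → ℝ) → Fin 3 → ℝ) (hv : ContDiff ℝ (⊤ : ℕ∞) v) (hu : ContDiff ℝ (⊤ : ℕ∞) u)
    (hvu : ∀ y, dot3 (v y) (v y) = 1) (x : Fin d → ℝ) :
    VLkk d v u 1 x = VSkk d v u 1 x + (1/2 : ℝ) * pd d 1 (Ekk d v u) x := by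
  have H : ∀ (j k : Fin 3) (m : Fin 3), pd d j (pd d k (fun y => u y m)) x
      = pd d k (pd d j (fun y => u y m)) x := fun j k m =>
    pd_comm j k (contDiff_comp3 u hu m)
  have hC0 : v x 0 * v x 0 + v x 1 * v x 1 + v x 2 * v x 2 = 1 := by
    simpa [dot3, Fin.sum_univ_three] using hvu x
  have hvfun : (fun y => v y 0 * v y 0 + v y 1 * v y 1 + v y 2 * v y 2) = (fun _ => (1:ℝ)) := by
    funext y
    simpa [dot3, Fin.sum_univ_three] using hvu y
  have hC1 : ∀ j : Fin 3, v x 0 * pd d j (fun y => v y 0) x + v x 1 * pd d j (fun y => v y 1) x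
      + v x 2 * pd d j (fun y => v y 2) x = 0 := by
    intro j
    have hd1 := congrArg (fun f => pd d j f x) hvfun
    simp (disch := fun_prop) only [pd_add, pd_mul, pd_const] at hd1
    linear_combination hd1 / 2
  simp only [VLkk, VSkk, Tkk_def, Ekk_def, curl3, dot3, Pi.smul_apply,
      smul_eq_mul, Fin.sum_univ_three, Fin.reduceAdd]
  simp (disch := fun_prop) only [pd_add, pd_sub, pd_mul, pd_cmul, pd_const]
  simp only [H 1 0, H 2 0, H 2 1]
  linear_combination ((-2 : ℝ) * pd d 0 (fun y => u y 1) x * pd d 1 (fun y => u y 1) x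
      + (-2 : ℝ) * pd d 0 (fun y => u y 2) x * pd d 1 (fun y => u y 2) x
      + (2 : ℝ) * pd d 1 (fun y => u y 0) x * pd d 1 (fun y => u y 1) x
      + (2 : ℝ) * pd d 1 (fun y => u y 2) x * pd d 2 (fun y => u y 0) x) * hC1 0
    + ((2 : ℝ) * pd d 0 (fun y => u y 1) x * pd d 1 (fun y => u y 0) x
      + (-2 : ℝ) * pd d 1 (fun y => u y 0) x * pd d 1 (fun y => u y 0) x
      + (-2 : ℝ) * pd d 1 (fun y => u y 2) x * pd d 1 (fun y => u y 2) x
      + (2 : ℝ) * pd d 1 (fun y => u y 2) x * pd d 2 (fun y => u y 1) x) * hC1 1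
    + ((2 : ℝ) * pd d 0 (fun y => u y 2) x * pd d 1 (fun y => u y 0) x
      + (-2 : ℝ) * pd d 1 (fun y => u y 0) x * pd d 2 (fun y => u y 0) x
      + (2 : ℝ) * pd d 1 (fun y => u y 1) x * pd d 1 (fun y => u y 2) x
      + (-2 : ℝ) * pd d 1 (fun y => u y 1) x * pd d 2 (fun y => u y 1) x) * hC1 2
    + ((-1 : ℝ) * pd d 0 (pd d 0 (fun y => u y 1)) x * pd d 1 (fun y => u y 1) x
      + (-1 : ℝ) * pd d 0 (pd d 0 (fun y => u y 2)) x * pd d 1 (fun y => u y 2) x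
      + (1 : ℝ) * pd d 0 (pd d 1 (fun y => u y 0)) x * pd d 1 (fun y => u y 1) x
      + (-1 : ℝ) * pd d 0 (pd d 1 (fun y => u y 1)) x * pd d 0 (fun y => u y 1) x
      + (2 : ℝ) * pd d 0 (pd d 1 (fun y => u y 1)) x * pd d 1 (fun y => u y 0) x
      + (-1 : ℝ) * pd d 0 (pd d 1 (fun y => u y 2)) x * pd d 0 (fun y => u y 2) x
      + (1 : ℝ) * pd d 0 (pd d 1 (fun y => u y 2)) x * pd d 2 (fun y => u y 0) x
      + (1 : ℝ) * pd d 0 (pd d 2 (fun y => u y 0)) x * pd d 1 (fun y => u y 2) x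
      + (1 : ℝ) * pd d 0 (pd d 2 (fun y => u y 2)) x * pd d 1 (fun y => u y 0) x
      + (1 : ℝ) * pd d 1 (pd d 1 (fun y => u y 0)) x * pd d 0 (fun y => u y 1) x
      + (-2 : ℝ) * pd d 1 (pd d 1 (fun y => u y 0)) x * pd d 1 (fun y => u y 0) x
      + (-2 : ℝ) * pd d 1 (pd d 1 (fun y => u y 2)) x * pd d 1 (fun y => u y 2) x
      + (1 : ℝ) * pd d 1 (pd d 1 (fun y => u y 2)) x * pd d 2 (fun y => u y 1) x
      + (1 : ℝ) * pd d 1 (pd d 2 (fun y => u y 0)) x * pd d 0 (fun y => u y 2) x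
      + (-1 : ℝ) * pd d 1 (pd d 2 (fun y => u y 0)) x * pd d 2 (fun y => u y 0) x
      + (2 : ℝ) * pd d 1 (pd d 2 (fun y => u y 1)) x * pd d 1 (fun y => u y 2) x
      + (-1 : ℝ) * pd d 1 (pd d 2 (fun y => u y 1)) x * pd d 2 (fun y => u y 1) x
      + (1 : ℝ) * pd d 1 (pd d 2 (fun y => u y 2)) x * pd d 1 (fun y => u y 1) x
      + (-1 : ℝ) * pd d 2 (pd d 2 (fun y => u y 0)) x * pd d 1 (fun y => u y 0) x
      + (-1 : ℝ) * pd d 2 (pd d 2 (fun y => u y 1)) x * pd d 1 (fun y => u y 1) x) * hC0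

set_option maxHeartbeats 4000000 in
lemma piece_kk2 (v u : (Fin d → ℝ) → Fin 3 → ℝ) (hv : ContDiff ℝ (⊤ : ℕ∞) v) (hu : ContDiff ℝ (⊤ : ℕ∞) u)
    (hvu : ∀ y, dot3 (v y) (v y) = 1) (x : Fin d → ℝ) :
    VLkk d v u 2 x = VSkk d v u 2 x + (1/2 : ℝ) * pd d 2 (Ekk d v u) x := by
  have H : ∀ (j k : Fin 3) (m : Fin 3), pd d j (pd d k (fun y => u y m)) x
      = pd d k (pd d j (fun y => u y m)) x := fun j k m =>
    pd_comm j k (contDiff_comp3 u hu m)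
  have hC0 : v x 0 * v x 0 + v x 1 * v x 1 + v x 2 * v x 2 = 1 := by
    simpa [dot3, Fin.sum_univ_three] using hvu x
  have hvfun : (fun y => v y 0 * v y 0 + v y 1 * v y 1 + v y 2 * v y 2) = (fun _ => (1:ℝ)) := by
    funext y
    simpa [dot3, Fin.sum_univ_three] using hvu y
  have hC1 : ∀ j : Fin 3, v x 0 * pd d j (fun y => v y 0) x + v x 1 * pd d j (fun y => v y 1) x
      + v x 2 * pd d j (fun y => v y 2) x = 0 := by
    intro j
    have hd1 := congrArg (fun f => pd d j f x) hvfun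
    simp (disch := fun_prop) only [pd_add, pd_mul, pd_const] at hd1
    linear_combination hd1 / 2
  simp only [VLkk, VSkk, Tkk_def, Ekk_def, curl3, dot3, Pi.smul_apply,
      smul_eq_mul, Fin.sum_univ_three, Fin.reduceAdd]
  simp (disch := fun_prop) only [pd_add, pd_sub, pd_mul, pd_cmul, pd_const]
  simp only [H 1 0, H 2 0, H 2 1]
  linear_combination ((-2 : ℝ) * pd d 0 (fun y => u y 1) x * pd d 2 (fun y => u y 1) x
      + (-2 : ℝ) * pd d 0 (fun y => u y 2) x * pd d 2 (fun y => u y 2) x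
      + (2 : ℝ) * pd d 1 (fun y => u y 0) x * pd d 2 (fun y => u y 1) x
      + (2 : ℝ) * pd d 2 (fun y => u y 0) x * pd d 2 (fun y => u y 2) x) * hC1 0
    + ((2 : ℝ) * pd d 0 (fun y => u y 1) x * pd d 2 (fun y => u y 0) x
      + (-2 : ℝ) * pd d 1 (fun y => u y 0) x * pd d 2 (fun y => u y 0) x
      + (-2 : ℝ) * pd d 1 (fun y => u y 2) x * pd d 2 (fun y => u y 2) x
      + (2 : ℝ) * pd d 2 (fun y => u y 1) x * pd d 2 (fun y => u y 2) x) * hC1 1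
    + ((2 : ℝ) * pd d 0 (fun y => u y 2) x * pd d 2 (fun y => u y 0) x
      + (2 : ℝ) * pd d 1 (fun y => u y 2) x * pd d 2 (fun y => u y 1) x
      + (-2 : ℝ) * pd d 2 (fun y => u y 0) x * pd d 2 (fun y => u y 0) x
      + (-2 : ℝ) * pd d 2 (fun y => u y 1) x * pd d 2 (fun y => u y 1) x) * hC1 2
    + ((-1 : ℝ) * pd d 0 (pd d 0 (fun y => u y 1)) x * pd d 2 (fun y => u y 1) x
      + (-1 : ℝ) * pd d 0 (pd d 0 (fun y => u y 2)) x * pd d 2 (fun y => u y 2) x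
      + (1 : ℝ) * pd d 0 (pd d 1 (fun y => u y 0)) x * pd d 2 (fun y => u y 1) x
      + (1 : ℝ) * pd d 0 (pd d 1 (fun y => u y 1)) x * pd d 2 (fun y => u y 0) x
      + (1 : ℝ) * pd d 0 (pd d 2 (fun y => u y 0)) x * pd d 2 (fun y => u y 2) x
      + (-1 : ℝ) * pd d 0 (pd d 2 (fun y => u y 1)) x * pd d 0 (fun y => u y 1) x
      + (1 : ℝ) * pd d 0 (pd d 2 (fun y => u y 1)) x * pd d 1 (fun y => u y 0) x
      + (-1 : ℝ) * pd d 0 (pd d 2 (fun y => u y 2)) x * pd d 0 (fun y => u y 2) x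
      + (2 : ℝ) * pd d 0 (pd d 2 (fun y => u y 2)) x * pd d 2 (fun y => u y 0) x
      + (-1 : ℝ) * pd d 1 (pd d 1 (fun y => u y 0)) x * pd d 2 (fun y => u y 0) x
      + (-1 : ℝ) * pd d 1 (pd d 1 (fun y => u y 2)) x * pd d 2 (fun y => u y 2) x
      + (1 : ℝ) * pd d 1 (pd d 2 (fun y => u y 0)) x * pd d 0 (fun y => u y 1) x
      + (-1 : ℝ) * pd d 1 (pd d 2 (fun y => u y 0)) x * pd d 1 (fun y => u y 0) x
      + (1 : ℝ) * pd d 1 (pd d 2 (fun y => u y 1)) x * pd d 2 (fun y => u y 2) x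
      + (-1 : ℝ) * pd d 1 (pd d 2 (fun y => u y 2)) x * pd d 1 (fun y => u y 2) x
      + (2 : ℝ) * pd d 1 (pd d 2 (fun y => u y 2)) x * pd d 2 (fun y => u y 1) x
      + (1 : ℝ) * pd d 2 (pd d 2 (fun y => u y 0)) x * pd d 0 (fun y => u y 2) x
      + (-2 : ℝ) * pd d 2 (pd d 2 (fun y => u y 0)) x * pd d 2 (fun y => u y 0) x
      + (1 : ℝ) * pd d 2 (pd d 2 (fun y => u y 1)) x * pd d 1 (fun y => u y 2) x
      + (-2 : ℝ) * pd d 2 (pd d 2 (fun y => u y 1)) x * pd d 2 (fun y => u y 1) x) * hC0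

lemma piece_kk (v u : (Fin d → ℝ) → Fin 3 → ℝ) (hv : ContDiff ℝ (⊤ : ℕ∞) v) (hu : ContDiff ℝ (⊤ : ℕ∞) u)
    (hvu : ∀ y, dot3 (v y) (v y) = 1) (i : Fin 3) (x : Fin d → ℝ) :
    VLkk d v u i x = VSkk d v u i x + (1/2 : ℝ) * pd d i (Ekk d v u) x := by
  fin_cases i
  · exact piece_kk0 v u hv hu hvu x
  · exact piece_kk1 v u hv hu hvu x
  · exact piece_kk2 v u hv hu hvu x

lemma decompL (γ kc : Fin 3 → ℝ) (kk : Fin 3 → Fin 3 → ℝ)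
    (n : Fin 3 → (Fin d → ℝ) → Fin 3 → ℝ) (i : Fin 3) (x : Fin d → ℝ) :
    -(∑ α : Fin 3, dot3 (fun m => pd d i (fun y => n α y m) x) (hvec d γ kc kk n α x))
    = (∑ a : Fin 3, (γ a * VLgam d (n a) i x + kc a * VLkc d (n a) i x))
      + ∑ a : Fin 3, ∑ b : Fin 3, kk b a * VLkk d (n b) (n a) i x := by
  simp only [hvec, dot3, VLgam, VLkc, VLkk, Fin.sum_univ_three]
  ring

lemma sigma_split (γ kc : Fin 3 → ℝ) (kk : Fin 3 → Fin 3 → ℝ)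
    (n : Fin 3 → (Fin d → ℝ) → Fin 3 → ℝ) (i j : Fin 3) :
    σd d γ kc kk n i j = fun y =>
      -(γ 0 * Tgam d (n 0) i j y + γ 1 * Tgam d (n 1) i j y + γ 2 * Tgam d (n 2) i j y)
      - (kc 0 * Tkc d (n 0) i j y + kc 1 * Tkc d (n 1) i j y + kc 2 * Tkc d (n 2) i j y)
      - (kk 0 0 * Tkk d (n 0) (n 0) i j y + kk 1 0 * Tkk d (n 1) (n 0) i j y
        + kk 2 0 * Tkk d (n 2) (n 0) i j y + kk 0 1 * Tkk d (n 0) (n 1) i j y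
        + kk 1 1 * Tkk d (n 1) (n 1) i j y + kk 2 1 * Tkk d (n 2) (n 1) i j y
        + kk 0 2 * Tkk d (n 0) (n 2) i j y + kk 1 2 * Tkk d (n 1) (n 2) i j y
        + kk 2 2 * Tkk d (n 2) (n 2) i j y) := by
  funext y
  simp only [σd, Tgam, Tkc, Tkk, Fin.sum_univ_three]
  ring

lemma decompS (γ kc : Fin 3 → ℝ) (kk : Fin 3 → Fin 3 → ℝ)
    (n : Fin 3 → (Fin d → ℝ) → Fin 3 → ℝ)
    (h0 : ContDiff ℝ (⊤ : ℕ∞) (n 0)) (h1 : ContDiff ℝ (⊤ : ℕ∞) (n 1)) (h2 : ContDiff ℝ (⊤ : ℕ∞) (n 2))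
    (i : Fin 3) (x : Fin d → ℝ) :
    (∑ j : Fin 3, pd d j (σd d γ kc kk n i j) x)
    = (∑ a : Fin 3, (γ a * VSgam d (n a) i x + kc a * VSkc d (n a) i x))
      + ∑ a : Fin 3, ∑ b : Fin 3, kk b a * VSkk d (n b) (n a) i x := by
  have hpd : ∀ j : Fin 3, pd d j (σd d γ kc kk n i j) x
      = -(γ 0 * pd d j (Tgam d (n 0) i j) x + γ 1 * pd d j (Tgam d (n 1) i j) x
          + γ 2 * pd d j (Tgam d (n 2) i j) x)
        - (kc 0 * pd d j (Tkc d (n 0) i j) x + kc 1 * pd d j (Tkc d (n 1) i j) x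
          + kc 2 * pd d j (Tkc d (n 2) i j) x)
        - (kk 0 0 * pd d j (Tkk d (n 0) (n 0) i j) x + kk 1 0 * pd d j (Tkk d (n 1) (n 0) i j) x
          + kk 2 0 * pd d j (Tkk d (n 2) (n 0) i j) x + kk 0 1 * pd d j (Tkk d (n 0) (n 1) i j) x
          + kk 1 1 * pd d j (Tkk d (n 1) (n 1) i j) x + kk 2 1 * pd d j (Tkk d (n 2) (n 1) i j) x
          + kk 0 2 * pd d j (Tkk d (n 0) (n 2) i j) x + kk 1 2 * pd d j (Tkk d (n 1) (n 2) i j) x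
          + kk 2 2 * pd d j (Tkk d (n 2) (n 2) i j) x) := by
    intro j
    rw [sigma_split γ kc kk n i j]
    simp (disch := fun_prop) only [pd_sub, pd_add, pd_cmul, pd_neg]
  rw [Fin.sum_univ_three, hpd 0, hpd 1, hpd 2]
  simp only [VSgam, VSkc, VSkk, Fin.sum_univ_three]
  ring

end BodyForcePieces


/-- **Body force as a stress divergence (Lemma 2.2)**: for every smooth orthonormal frame
field `F : ℝ^d → SO(3)` (`d ∈ {2,3}`) there is a smooth scalar `p̃` such that for each
spatial index `i`, pointwise, `𝔉_i := −Σ_α ∂_i n_α · h_α = ∂_j σ^d_{ij} + ∂_i p̃`. -/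
theorem body_force_stress (d : ℕ) (hd : d = 2 ∨ d = 3)
    (K : Fin 12 → ℝ) (hK : ∀ i, 0 < K i)
    (n : Fin 3 → (Fin d → ℝ) → Fin 3 → ℝ) (hsm : ∀ i, ContDiff ℝ (⊤ : ℕ∞) (n i))
    (hF : IsFrame d n) :
    ∃ pt : (Fin d → ℝ) → ℝ, ContDiff ℝ (⊤ : ℕ∞) pt ∧
      ∀ i : Fin 3, (i : ℕ) < d → ∀ x,
        -(∑ α : Fin 3, dot3 (fun m => pd d i (fun y => n α y m) x)
            (hvec d (γof K) (kcof K) (kkof K) n α x))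
          = (∑ j : Fin 3, pd d j (σd d (γof K) (kcof K) (kkof K) n i j) x)
            + pd d i pt x := by
  have h0 : ContDiff ℝ (⊤ : ℕ∞) (n 0) := hsm 0
  have h1 : ContDiff ℝ (⊤ : ℕ∞) (n 1) := hsm 1
  have h2 : ContDiff ℝ (⊤ : ℕ∞) (n 2) := hsm 2
  have hunit : ∀ a : Fin 3, ∀ y, dot3 (n a y) (n a y) = 1 := by
    intro a y
    simpa using ((hF y).1 a a)
  refine ⟨fun x => (1/2 : ℝ) * (γof K 0 * Egam d (n 0) x
      + γof K 1 * Egam d (n 1) x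
      + γof K 2 * Egam d (n 2) x
      + kcof K 0 * Ekc d (n 0) x
      + kcof K 1 * Ekc d (n 1) x
      + kcof K 2 * Ekc d (n 2) x
      + kkof K 0 0 * Ekk d (n 0) (n 0) x
      + kkof K 0 1 * Ekk d (n 0) (n 1) x
      + kkof K 0 2 * Ekk d (n 0) (n 2) x
      + kkof K 1 0 * Ekk d (n 1) (n 0) x
      + kkof K 1 1 * Ekk d (n 1) (n 1) x
      + kkof K 1 2 * Ekk d (n 1) (n 2) x
      + kkof K 2 0 * Ekk d (n 2) (n 0) x
      + kkof K 2 1 * Ekk d (n 2) (n 1) x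
      + kkof K 2 2 * Ekk d (n 2) (n 2) x), ?_, ?_⟩
  · fun_prop
  · intro i hi x
    rw [decompL, decompS _ _ _ _ h0 h1 h2]
    have hpt : pd d i (fun x => (1/2 : ℝ) * (γof K 0 * Egam d (n 0) x
        + γof K 1 * Egam d (n 1) x
        + γof K 2 * Egam d (n 2) x
        + kcof K 0 * Ekc d (n 0) x
        + kcof K 1 * Ekc d (n 1) x
        + kcof K 2 * Ekc d (n 2) x
        + kkof K 0 0 * Ekk d (n 0) (n 0) x
        + kkof K 0 1 * Ekk d (n 0) (n 1) x
        + kkof K 0 2 * Ekk d (n 0) (n 2) x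
        + kkof K 1 0 * Ekk d (n 1) (n 0) x
        + kkof K 1 1 * Ekk d (n 1) (n 1) x
        + kkof K 1 2 * Ekk d (n 1) (n 2) x
        + kkof K 2 0 * Ekk d (n 2) (n 0) x
        + kkof K 2 1 * Ekk d (n 2) (n 1) x
        + kkof K 2 2 * Ekk d (n 2) (n 2) x)) x
        = (1/2 : ℝ) * (γof K 0 * pd d i (Egam d (n 0)) x
        + γof K 1 * pd d i (Egam d (n 1)) x
        + γof K 2 * pd d i (Egam d (n 2)) x
        + kcof K 0 * pd d i (Ekc d (n 0)) x
        + kcof K 1 * pd d i (Ekc d (n 1)) x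
        + kcof K 2 * pd d i (Ekc d (n 2)) x
        + kkof K 0 0 * pd d i (Ekk d (n 0) (n 0)) x
        + kkof K 0 1 * pd d i (Ekk d (n 0) (n 1)) x
        + kkof K 0 2 * pd d i (Ekk d (n 0) (n 2)) x
        + kkof K 1 0 * pd d i (Ekk d (n 1) (n 0)) x
        + kkof K 1 1 * pd d i (Ekk d (n 1) (n 1)) x
        + kkof K 1 2 * pd d i (Ekk d (n 1) (n 2)) x
        + kkof K 2 0 * pd d i (Ekk d (n 2) (n 0)) x
        + kkof K 2 1 * pd d i (Ekk d (n 2) (n 1)) x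
        + kkof K 2 2 * pd d i (Ekk d (n 2) (n 2)) x) := by
      simp (disch := fun_prop) only [pd_cmul, pd_add]
    rw [hpt]
    simp only [Fin.sum_univ_three]
    linear_combination γof K 0 * piece_gam hd (n 0) (hsm 0) i x
    + γof K 1 * piece_gam hd (n 1) (hsm 1) i x
    + γof K 2 * piece_gam hd (n 2) (hsm 2) i x
    + kcof K 0 * piece_kc (n 0) (hsm 0) i x
    + kcof K 1 * piece_kc (n 1) (hsm 1) i x
    + kcof K 2 * piece_kc (n 2) (hsm 2) i x
    + kkof K 0 0 * piece_kk (n 0) (n 0) (hsm 0) (hsm 0) (hunit 0) i x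
    + kkof K 0 1 * piece_kk (n 0) (n 1) (hsm 0) (hsm 1) (hunit 0) i x
    + kkof K 0 2 * piece_kk (n 0) (n 2) (hsm 0) (hsm 2) (hunit 0) i x
    + kkof K 1 0 * piece_kk (n 1) (n 0) (hsm 1) (hsm 0) (hunit 1) i x
    + kkof K 1 1 * piece_kk (n 1) (n 1) (hsm 1) (hsm 1) (hunit 1) i x
    + kkof K 1 2 * piece_kk (n 1) (n 2) (hsm 1) (hsm 2) (hunit 1) i x
    + kkof K 2 0 * piece_kk (n 2) (n 0) (hsm 2) (hsm 0) (hunit 2) i x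
    + kkof K 2 1 * piece_kk (n 2) (n 1) (hsm 2) (hsm 1) (hunit 2) i x
    + kkof K 2 2 * piece_kk (n 2) (n 2) (hsm 2) (hsm 2) (hunit 2) i x

end FrameHydro
end
end

section
/- Orthogonal decomposition on SO(3): For every F = (n1,n2,n3) ∈ SO(3) and all 3×3 real matrices A, B: A·B = Σ_{k=1}^3 (A·V_k)(B·V_k)/|V_k|² + Σ_{k=1}^6 (A·W_k)(B·W_k)/|W_k|². -/
open MeasureTheory Real Filter Set Matrix

noncomputable section
namespace FrameHydro

/-- 3×3 matrix from three column vectors. -/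
def mkCols (a b c : Fin 3 → ℝ) : M3 := Matrix.of fun p q => ![a, b, c] q p

/-- The tangent-space basis `V₁, V₂, V₃` at a frame. -/
def Vb (nv : Fin 3 → Fin 3 → ℝ) : Fin 3 → M3 :=
  ![mkCols 0 (nv 2) (-nv 1), mkCols (-nv 2) 0 (nv 0), mkCols (nv 1) (-nv 0) 0]

/-- The complementary basis `W₁, …, W₆` at a frame. -/
def Wb (nv : Fin 3 → Fin 3 → ℝ) : Fin 6 → M3 :=
  ![mkCols 0 (nv 2) (nv 1), mkCols (nv 2) 0 (nv 0), mkCols (nv 1) (nv 0) 0,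
    mkCols (nv 0) 0 0, mkCols 0 (nv 1) 0, mkCols 0 0 (nv 2)]

/-- `(n₁,n₂,n₃) ∈ SO(3)`: orthonormal with `n₃ = n₁ × n₂`. -/
def IsSO3 (nv : Fin 3 → Fin 3 → ℝ) : Prop :=
  (∀ i j, dot3 (nv i) (nv j) = if i = j then 1 else 0) ∧
    nv 2 = crossProduct (nv 0) (nv 1)

/-- **Orthogonal decomposition on SO(3)**: for every frame `F = (n₁,n₂,n₃) ∈ SO(3)` and all
3×3 real matrices `A, B`,
`A·B = Σ_{k=1}^3 (A·V_k)(B·V_k)/|V_k|² + Σ_{k=1}^6 (A·W_k)(B·W_k)/|W_k|²`. -/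
theorem orthogonal_decomposition (nv : Fin 3 → Fin 3 → ℝ) (hnv : IsSO3 nv) (A B : M3) :
    mdot A B
      = (∑ k : Fin 3, mdot A (Vb nv k) * mdot B (Vb nv k) / mdot (Vb nv k) (Vb nv k))
        + ∑ k : Fin 6, mdot A (Wb nv k) * mdot B (Wb nv k) / mdot (Wb nv k) (Wb nv k) := by
  obtain ⟨hortho, -⟩ := hnv
  -- row form of orthonormality
  have hd : ∀ i j : Fin 3, nv i 0 * nv j 0 + nv i 1 * nv j 1 + nv i 2 * nv j 2
      = if i = j then 1 else 0 := by
    intro i j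
    have := hortho i j
    simpa [dot3, Fin.sum_univ_three] using this
  -- completeness (column orthonormality)
  have hS : ∀ p l : Fin 3, nv 0 p * nv 0 l + nv 1 p * nv 1 l + nv 2 p * nv 2 l
      = if p = l then 1 else 0 := by
    have hN : (Matrix.of fun i j => nv i j) * (Matrix.of fun i j => nv i j)ᵀ = (1 : M3) := by
      ext i j
      have := hd i j
      simp [Matrix.mul_apply, Fin.sum_univ_three, Matrix.one_apply]
      linarith [hd i j]
    have hN' : (Matrix.of fun i j => nv i j)ᵀ * (Matrix.of fun i j => nv i j) = (1 : M3) :=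
      mul_eq_one_comm.mp hN
    intro p l
    have := congrFun (congrFun hN' p) l
    simp [Matrix.mul_apply, Fin.sum_univ_three, Matrix.one_apply] at this
    split <;> rename_i hh <;> simp [hh] at this ⊢ <;> linarith
  have e00 := hS 0 0; have e01 := hS 0 1; have e02 := hS 0 2
  have e10 := hS 1 0; have e11 := hS 1 1; have e12 := hS 1 2
  have e20 := hS 2 0; have e21 := hS 2 1; have e22 := hS 2 2
  simp only [reduceIte, Fin.reduceEq, if_true, if_false] at e00 e01 e02 e10 e11 e12 e20 e21 e22
  have d11 := hd 1 1; have d22 := hd 2 2; have d00 := hd 0 0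
  have d12 := hd 1 2; have d01 := hd 0 1; have d02 := hd 0 2
  simp only [reduceIte, Fin.reduceEq, if_true, if_false] at d00 d11 d22 d12 d01 d02
  have v0 : Vb nv 0 = mkCols 0 (nv 2) (-nv 1) := rfl
  have v1 : Vb nv 1 = mkCols (-nv 2) 0 (nv 0) := rfl
  have v2 : Vb nv 2 = mkCols (nv 1) (-nv 0) 0 := rfl
  have w0 : Wb nv 0 = mkCols 0 (nv 2) (nv 1) := rfl
  have w1 : Wb nv 1 = mkCols (nv 2) 0 (nv 0) := rfl
  have w2 : Wb nv 2 = mkCols (nv 1) (nv 0) 0 := rfl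
  have w3 : Wb nv 3 = mkCols (nv 0) 0 0 := rfl
  have w4 : Wb nv 4 = mkCols 0 (nv 1) 0 := rfl
  have w5 : Wb nv 5 = mkCols 0 0 (nv 2) := rfl
  have mk : ∀ a b c : Fin 3 → ℝ, ∀ p : Fin 3, mkCols a b c p 0 = a p ∧ mkCols a b c p 1 = b p ∧ mkCols a b c p 2 = c p := by
    intro a b c p; refine ⟨rfl, rfl, rfl⟩
  -- denominators
  have hV0 : mdot (Vb nv 0) (Vb nv 0) = 2 := by
    simp only [mdot, v0, v1, v2, Fin.sum_univ_three, (mk _ _ _ _).1, (mk _ _ _ _).2.1, (mk _ _ _ _).2.2, Pi.neg_apply, Pi.zero_apply]; linarith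
  have hV1 : mdot (Vb nv 1) (Vb nv 1) = 2 := by
    simp only [mdot, v0, v1, v2, Fin.sum_univ_three, (mk _ _ _ _).1, (mk _ _ _ _).2.1, (mk _ _ _ _).2.2, Pi.neg_apply, Pi.zero_apply]; linarith
  have hV2 : mdot (Vb nv 2) (Vb nv 2) = 2 := by
    simp only [mdot, v0, v1, v2, Fin.sum_univ_three, (mk _ _ _ _).1, (mk _ _ _ _).2.1, (mk _ _ _ _).2.2, Pi.neg_apply, Pi.zero_apply]; linarith
  have hW0 : mdot (Wb nv 0) (Wb nv 0) = 2 := by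
    simp only [mdot, w0, w1, w2, w3, w4, w5, Fin.sum_univ_three, (mk _ _ _ _).1, (mk _ _ _ _).2.1, (mk _ _ _ _).2.2, Pi.neg_apply, Pi.zero_apply]; linarith
  have hW1 : mdot (Wb nv 1) (Wb nv 1) = 2 := by
    simp only [mdot, w0, w1, w2, w3, w4, w5, Fin.sum_univ_three, (mk _ _ _ _).1, (mk _ _ _ _).2.1, (mk _ _ _ _).2.2, Pi.neg_apply, Pi.zero_apply]; linarith
  have hW2 : mdot (Wb nv 2) (Wb nv 2) = 2 := by
    simp only [mdot, w0, w1, w2, w3, w4, w5, Fin.sum_univ_three, (mk _ _ _ _).1, (mk _ _ _ _).2.1, (mk _ _ _ _).2.2, Pi.neg_apply, Pi.zero_apply]; linarith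
  have hW3 : mdot (Wb nv 3) (Wb nv 3) = 1 := by
    simp only [mdot, w0, w1, w2, w3, w4, w5, Fin.sum_univ_three, (mk _ _ _ _).1, (mk _ _ _ _).2.1, (mk _ _ _ _).2.2, Pi.neg_apply, Pi.zero_apply]; linarith
  have hW4 : mdot (Wb nv 4) (Wb nv 4) = 1 := by
    simp only [mdot, w0, w1, w2, w3, w4, w5, Fin.sum_univ_three, (mk _ _ _ _).1, (mk _ _ _ _).2.1, (mk _ _ _ _).2.2, Pi.neg_apply, Pi.zero_apply]; linarith
  have hW5 : mdot (Wb nv 5) (Wb nv 5) = 1 := by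
    simp only [mdot, w0, w1, w2, w3, w4, w5, Fin.sum_univ_three, (mk _ _ _ _).1, (mk _ _ _ _).2.1, (mk _ _ _ _).2.2, Pi.neg_apply, Pi.zero_apply]; linarith
  rw [Fin.sum_univ_three, Fin.sum_univ_six, hV0, hV1, hV2, hW0, hW1, hW2, hW3, hW4, hW5]
  simp only [mdot, v0, v1, v2, w0, w1, w2, w3, w4, w5, Fin.sum_univ_three,
    (mk _ _ _ _).1, (mk _ _ _ _).2.1, (mk _ _ _ _).2.2, Pi.neg_apply, Pi.zero_apply]
  linear_combination
    (-(A 0 0 * B 0 0 + A 0 1 * B 0 1 + A 0 2 * B 0 2)) * e00 +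
    (-(A 0 0 * B 1 0 + A 0 1 * B 1 1 + A 0 2 * B 1 2)) * e01 +
    (-(A 0 0 * B 2 0 + A 0 1 * B 2 1 + A 0 2 * B 2 2)) * e02 +
    (-(A 1 0 * B 0 0 + A 1 1 * B 0 1 + A 1 2 * B 0 2)) * e10 +
    (-(A 1 0 * B 1 0 + A 1 1 * B 1 1 + A 1 2 * B 1 2)) * e11 +
    (-(A 1 0 * B 2 0 + A 1 1 * B 2 1 + A 1 2 * B 2 2)) * e12 +
    (-(A 2 0 * B 0 0 + A 2 1 * B 0 1 + A 2 2 * B 0 2)) * e20 +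
    (-(A 2 0 * B 1 0 + A 2 1 * B 1 1 + A 2 2 * B 1 2)) * e21 +
    (-(A 2 0 * B 2 0 + A 2 1 * B 2 1 + A 2 2 * B 2 2)) * e22

end FrameHydro
end
end

section
/- Differential identity for unit vector fields: For every C² map n : ℝ³ → ℝ³ with |n(x)| = 1 for all x ∈ ℝ³, the following identity holds pointwise: |∇n|² = (div n)² + (n·curl n)² + |n × curl n|² + div((n·∇)n − (div n)n). -/
open MeasureTheory Real Filter Set Matrix

noncomputable section
namespace FrameHydro

private lemma cross_alg (a0 a1 a2 c0 c1 c2 : ℝ) (hu : a0*a0+a1*a1+a2*a2 = 1) :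
    c0^2+c1^2+c2^2 = (a0*c0+a1*c1+a2*c2)^2
      + ((a1*c2-a2*c1)^2+(a2*c0-a0*c2)^2+(a0*c1-a1*c0)^2) := by
  linear_combination (-(c0^2+c1^2+c2^2)) * hu

private lemma pd3_apply (i : Fin 3) (g : (Fin 3 → ℝ) → ℝ) (y : Fin 3 → ℝ) :
    pd 3 i g y = fderiv ℝ g y (Pi.single i 1) := by
  simp [pd]

/-- **Differential identity for unit vector fields**: for a C² map `n : ℝ³ → ℝ³` with
`|n| ≡ 1`, pointwise
`|∇n|² = (div n)² + (n·curl n)² + |n × curl n|² + div((n·∇)n − (div n)n)`. -/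
theorem unit_field_identity (n : (Fin 3 → ℝ) → Fin 3 → ℝ)
    (hn : ContDiff ℝ 2 n) (hunit : ∀ x, dot3 (n x) (n x) = 1) (x : Fin 3 → ℝ) :
    (∑ i : Fin 3, ∑ j : Fin 3, (pd 3 j (fun y => n y i) x) ^ 2)
      = (div3 3 n x) ^ 2 + (dot3 (n x) (curl3 3 n x)) ^ 2
        + dot3 (crossProduct (n x) (curl3 3 n x)) (crossProduct (n x) (curl3 3 n x))
        + div3 3 (nullLag 3 n) x := by
  classical
  have hf : ∀ i : Fin 3, ContDiff ℝ 2 (fun y => n y i) := fun i => contDiff_pi.1 hn i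
  have hfd : ∀ (i : Fin 3) (y : Fin 3 → ℝ), DifferentiableAt ℝ (fun z => n z i) y :=
    fun i y => ((hf i).differentiable two_ne_zero) y
  have hD1 : ∀ (i k : Fin 3),
      ContDiff ℝ 1 (fun y => fderiv ℝ (fun z => n z i) y (Pi.single k 1)) :=
    fun i k => ((hf i).fderiv_right (by norm_num)).clm_apply contDiff_const
  set Q : Fin 3 → Fin 3 → Fin 3 → ℝ := fun i k j =>
    fderiv ℝ (fun y => fderiv ℝ (fun z => n z i) y (Pi.single k 1)) x (Pi.single j 1) with hQdef
  have hQsym : ∀ i k j, Q i k j = Q i j k := by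
    intro i k j
    have hdf : DifferentiableAt ℝ (fderiv ℝ (fun z => n z i)) x :=
      (((hf i).fderiv_right (by norm_num)).differentiable one_ne_zero) x
    have key : ∀ u : Fin 3 → ℝ, fderiv ℝ (fun y => fderiv ℝ (fun z => n z i) y u) x
        = (fderiv ℝ (fderiv ℝ (fun z => n z i)) x).flip u := by
      intro u
      rw [fderiv_clm_apply hdf (differentiableAt_const u)]
      simp
    have hs := ((hf i).contDiffAt (x := x)).isSymmSndFDerivAt (by simp [minSmoothness_of_isRCLikeNormedField])
    simp only [hQdef, key, ContinuousLinearMap.flip_apply]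
    exact hs (Pi.single j 1) (Pi.single k 1)
  have hterm : ∀ j : Fin 3, pd 3 j (fun y => nullLag 3 n y j) x
      = (∑ k : Fin 3, (n x k * Q j k j
          + fderiv ℝ (fun z => n z j) x (Pi.single k 1)
            * fderiv ℝ (fun z => n z k) x (Pi.single j 1)))
        - ((∑ k : Fin 3, Q k k j) * n x j
          + (∑ k : Fin 3, fderiv ℝ (fun z => n z k) x (Pi.single k 1))
            * fderiv ℝ (fun z => n z j) x (Pi.single j 1)) := by
    intro j
    have hg : (fun y => nullLag 3 n y j)
        = fun y => (∑ k : Fin 3, n y k * fderiv ℝ (fun z => n z j) y (Pi.single k 1))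
            - (∑ k : Fin 3, fderiv ℝ (fun z => n z k) y (Pi.single k 1)) * n y j := by
      funext y
      simp only [nullLag, convDer, div3, Pi.sub_apply, Pi.smul_apply, smul_eq_mul, pd3_apply]
    have h1 : HasFDerivAt
        (fun y => ∑ k : Fin 3, n y k * fderiv ℝ (fun z => n z j) y (Pi.single k 1))
        (∑ k : Fin 3, (n x k • fderiv ℝ
            (fun y => fderiv ℝ (fun z => n z j) y (Pi.single k 1)) x
          + fderiv ℝ (fun z => n z j) x (Pi.single k 1) • fderiv ℝ (fun z => n z k) x)) x :=
      HasFDerivAt.fun_sum fun k _ =>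
        (hfd k x).hasFDerivAt.fun_mul ((hD1 j k).differentiable one_ne_zero x).hasFDerivAt
    have h2 : HasFDerivAt
        (fun y => (∑ k : Fin 3, fderiv ℝ (fun z => n z k) y (Pi.single k 1)) * n y j)
        ((∑ k : Fin 3, fderiv ℝ (fun z => n z k) x (Pi.single k 1)) •
            fderiv ℝ (fun z => n z j) x
          + n x j • (∑ k : Fin 3, fderiv ℝ
              (fun y => fderiv ℝ (fun z => n z k) y (Pi.single k 1)) x)) x :=
      (HasFDerivAt.fun_sum fun k _ =>
        ((hD1 k k).differentiable one_ne_zero x).hasFDerivAt).fun_mul (hfd j x).hasFDerivAt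
    have h := (h1.fun_sub h2).fderiv
    rw [pd3_apply, hg, h]
    simp only [ContinuousLinearMap.sub_apply, ContinuousLinearMap.add_apply,
      ContinuousLinearMap.coe_sum', Finset.sum_apply, ContinuousLinearMap.smul_apply,
      smul_eq_mul, ContinuousLinearMap.coe_smul', Pi.smul_apply, hQdef]
    simp only [Fin.sum_univ_three]
    ring
  have hdivNL : div3 3 (nullLag 3 n) x
      = (∑ j : Fin 3, ∑ k : Fin 3, fderiv ℝ (fun z => n z j) x (Pi.single k 1)
          * fderiv ℝ (fun z => n z k) x (Pi.single j 1))
        - (∑ i : Fin 3, fderiv ℝ (fun z => n z i) x (Pi.single i 1)) ^ 2 := by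
    simp only [div3, pd3_apply] at hterm ⊢
    simp only [div3, hterm, Fin.sum_univ_three]
    linear_combination (n x 0) * hQsym 0 0 0 + (n x 1) * hQsym 0 1 0 + (n x 2) * hQsym 0 2 0
      + (n x 0) * hQsym 1 0 1 + (n x 1) * hQsym 1 1 1 + (n x 2) * hQsym 1 2 1
      + (n x 0) * hQsym 2 0 2 + (n x 1) * hQsym 2 1 2 + (n x 2) * hQsym 2 2 2
  have hu : n x 0 * n x 0 + n x 1 * n x 1 + n x 2 * n x 2 = 1 := by
    simpa [dot3, Fin.sum_univ_three] using hunit x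
  have key := cross_alg (n x 0) (n x 1) (n x 2)
    (fderiv ℝ (fun z => n z 2) x (Pi.single 1 1) - fderiv ℝ (fun z => n z 1) x (Pi.single 2 1))
    (fderiv ℝ (fun z => n z 0) x (Pi.single 2 1) - fderiv ℝ (fun z => n z 2) x (Pi.single 0 1))
    (fderiv ℝ (fun z => n z 1) x (Pi.single 0 1) - fderiv ℝ (fun z => n z 0) x (Pi.single 1 1))
    hu
  rw [hdivNL]
  simp only [div3, dot3, curl3, cross_apply, pd3_apply, Fin.sum_univ_three, Fin.reduceAdd]
  simp only [Fin.isValue, Matrix.cons_val_zero, Matrix.cons_val_one, Matrix.head_cons,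
    Matrix.cons_val_two, Matrix.tail_cons]
  linear_combination key

end FrameHydro
end
end

section
/- Reformulation of the elastic energy density: For every C² orthonormal frame field F = (n1,n2,n3) : ℝ³ → SO(3), the following identity holds pointwise: f_Bi(F,∇F) = (1/2)Σ_{i=1}^3 γ_i|∇n_i|² + W(F,∇F), where W(F,∇F) = (1/2)(Σ_{i=1}^3 k_i(div n_i)² + Σ_{i,j=1}^3 k_{ij}(n_i·curl n_j)²). -/
open MeasureTheory Real Filter Set Matrix

noncomputable section
namespace FrameHydro

lemma pd3_eq (j : Fin 3) (f : (Fin 3 → ℝ) → ℝ) (x : Fin 3 → ℝ) :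
    pd 3 j f x = fderiv ℝ f x (Pi.single j 1) := by
  simp [pd]

private def pder (u : (Fin 3 → ℝ) → Fin 3 → ℝ) (m j : Fin 3) : (Fin 3 → ℝ) → ℝ :=
  fun y => fderiv ℝ (fun z => u z m) y (Pi.single j 1)

lemma key (u : (Fin 3 → ℝ) → Fin 3 → ℝ) (hu : ContDiff ℝ 2 u) (x : Fin 3 → ℝ) :
    ∑ m : Fin 3, ∑ j : Fin 3, (pd 3 j (fun y => u y m) x) ^ 2
      = (div3 3 u x) ^ 2 + (∑ k : Fin 3, (curl3 3 u x k) ^ 2)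
        + div3 3 (nullLag 3 u) x := by
  have hf : ∀ m : Fin 3, ContDiff ℝ 2 (fun y => u y m) := fun m =>
    (contDiff_pi.mp hu) m
  let p : Fin 3 → Fin 3 → (Fin 3 → ℝ) → ℝ := pder u
  have hp_def : ∀ m j y, p m j y = fderiv ℝ (fun z => u z m) y (Pi.single j 1) :=
    fun _ _ _ => rfl
  have hF1 : ∀ m : Fin 3, ContDiff ℝ 1 (fderiv ℝ (fun z => u z m)) := fun m =>
    (hf m).fderiv_right (by norm_num)
  have hp : ∀ m j, ContDiff ℝ 1 (p m j) := fun m j =>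
    (hF1 m).clm_apply contDiff_const
  have hpd : ∀ m j (y : Fin 3 → ℝ), DifferentiableAt ℝ (p m j) y := fun m j y =>
    ((hp m j).differentiable one_ne_zero).differentiableAt
  have hfd : ∀ m (y : Fin 3 → ℝ), DifferentiableAt ℝ (fun z => u z m) y := fun m y =>
    ((hf m).differentiable two_ne_zero).differentiableAt
  -- second derivatives and symmetry
  have hsnd : ∀ m j k, fderiv ℝ (p m k) x (Pi.single j 1)
      = fderiv ℝ (fderiv ℝ (fun z => u z m)) x (Pi.single j 1) (Pi.single k 1) := by
    intro m j k
    have hd : DifferentiableAt ℝ (fderiv ℝ (fun z => u z m)) x :=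
      ((hF1 m).differentiable one_ne_zero).differentiableAt
    have h2 := fderiv_clm_apply (𝕜 := ℝ) hd
      (differentiableAt_const (Pi.single k (1:ℝ)))
    show fderiv ℝ (fun y => fderiv ℝ (fun z => u z m) y (Pi.single k (1:ℝ))) x
      (Pi.single j 1) = _
    rw [h2]
    simp
  have hsym : ∀ m j k, fderiv ℝ (p m k) x (Pi.single j 1)
      = fderiv ℝ (p m j) x (Pi.single k 1) := by
    intro m j k
    rw [hsnd m j k, hsnd m k j]
    exact ((hf m).contDiffAt.isSymmSndFDerivAt (by norm_num)) _ _
  -- rewrite nullLag components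
  have hNL : ∀ m : Fin 3, (fun y => nullLag 3 u y m)
      = fun y => (∑ k : Fin 3, u y k * p m k y) - (∑ k : Fin 3, p k k y) * u y m := by
    intro m; funext y
    simp only [hp_def, nullLag, convDer, div3, Pi.sub_apply, Pi.smul_apply, smul_eq_mul]
    simp [pd3_eq]
  -- differentiability of the pieces
  have hd1 : ∀ m (y : Fin 3 → ℝ),
      DifferentiableAt ℝ (fun z => ∑ k : Fin 3, u z k * p m k z) y := fun m y =>
    DifferentiableAt.fun_sum (fun k _ => (hfd k y).mul (hpd m k y))
  have hd2 : ∀ m (y : Fin 3 → ℝ),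
      DifferentiableAt ℝ (fun z => (∑ k : Fin 3, p k k z) * u z m) y := fun m y =>
    (DifferentiableAt.fun_sum (fun k _ => hpd k k y)).mul (hfd m y)
  have hA : ∀ m : Fin 3, pd 3 m (fun y => nullLag 3 u y m) x
      = (∑ k : Fin 3, (p k m x * p m k x
            + u x k * fderiv ℝ (p m m) x (Pi.single k 1)))
        - ((∑ k : Fin 3, p k k x) * p m m x
            + u x m * ∑ k : Fin 3, fderiv ℝ (p k k) x (Pi.single m 1)) := by
    intro m
    rw [hNL m, pd3_eq]
    rw [fderiv_fun_sub (hd1 m x) (hd2 m x)]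
    simp only [ContinuousLinearMap.sub_apply]
    congr 1
    · rw [fderiv_fun_sum (A := fun k z => u z k * p m k z) (fun k _ => (hfd k x).mul (hpd m k x))]
      simp only [ContinuousLinearMap.sum_apply]
      refine Finset.sum_congr rfl fun k _ => ?_
      rw [fderiv_fun_mul (hfd k x) (hpd m k x)]
      simp only [ContinuousLinearMap.add_apply, ContinuousLinearMap.smul_apply,
        smul_eq_mul]
      rw [hsym m k m]
      have hr : fderiv ℝ (fun z => u z k) x (Pi.single m 1) = p k m x := rfl
      rw [hr]; ring
    · rw [fderiv_fun_mul (DifferentiableAt.fun_sum (fun k _ => hpd k k x)) (hfd m x)]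
      simp only [ContinuousLinearMap.add_apply, ContinuousLinearMap.smul_apply,
        smul_eq_mul, ContinuousLinearMap.coe_sum', Finset.sum_apply]
      rw [fderiv_fun_sum (fun k _ => hpd k k x)]
      simp only [ContinuousLinearMap.sum_apply]
      have hr : fderiv ℝ (fun z => u z m) x (Pi.single m 1) = p m m x := rfl
      rw [hr]
  have hdiv : div3 3 (nullLag 3 u) x = ∑ m : Fin 3, pd 3 m (fun y => nullLag 3 u y m) x := rfl
  have hpd_eq : ∀ m j : Fin 3, pd 3 j (fun y => u y m) x = p m j x := fun m j =>
    pd3_eq j _ x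
  have hdivu : div3 3 u x = ∑ k : Fin 3, p k k x := by
    simp [div3, hpd_eq]
  have hcurl : ∀ k : Fin 3, curl3 3 u x k = p (k+2) (k+1) x - p (k+1) (k+2) x := by
    intro k; simp [curl3, hpd_eq]
  simp only [hpd_eq, hdivu, hcurl, hdiv, hA]
  simp only [Fin.sum_univ_three]
  simp only [show ((0:Fin 3)+1)=1 from rfl, show ((0:Fin 3)+2)=2 from rfl,
    show ((1:Fin 3)+1)=2 from rfl, show ((1:Fin 3)+2)=0 from rfl,
    show ((2:Fin 3)+1)=0 from rfl, show ((2:Fin 3)+2)=1 from rfl]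
  ring

lemma frame_sq (n : Fin 3 → (Fin 3 → ℝ) → Fin 3 → ℝ) (x : Fin 3 → ℝ)
    (horth : ∀ i j, dot3 (n i x) (n j x) = if i = j then 1 else 0)
    (w : Fin 3 → ℝ) :
    ∑ j : Fin 3, (dot3 (n j x) w) ^ 2 = ∑ k : Fin 3, (w k) ^ 2 := by
  set M : Matrix (Fin 3) (Fin 3) ℝ := Matrix.of fun i k => n i x k with hM
  have h1 : M * Mᵀ = 1 := by
    ext i j
    simpa [Matrix.mul_apply, Matrix.one_apply, hM, dot3] using horth i j
  have h2 : Mᵀ * M = 1 := mul_eq_one_comm.mp h1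
  have hcol : ∀ k l : Fin 3, ∑ j : Fin 3, n j x k * n j x l
      = if k = l then 1 else 0 := by
    intro k l
    have := congrFun (congrFun h2 k) l
    simpa [Matrix.mul_apply, Matrix.one_apply, hM] using this
  have e00 := hcol 0 0; have e11 := hcol 1 1; have e22 := hcol 2 2
  have e01 := hcol 0 1; have e02 := hcol 0 2; have e12 := hcol 1 2
  rw [if_pos rfl] at e00 e11 e22
  rw [if_neg (by decide)] at e01 e02 e12
  simp only [Fin.sum_univ_three] at e00 e11 e22 e01 e02 e12
  simp only [dot3, Fin.sum_univ_three]
  linear_combination (w 0)^2 * e00 + (w 1)^2 * e11 + (w 2)^2 * e22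
    + 2 * w 0 * w 1 * e01 + 2 * w 0 * w 2 * e02 + 2 * w 1 * w 2 * e12

/-- **Reformulation of the elastic energy density**: for a C² orthonormal frame field
`F = (n₁,n₂,n₃) : ℝ³ → SO(3)`, pointwise
`f_Bi(F,∇F) = (1/2)Σᵢ γᵢ|∇nᵢ|² + W(F,∇F)`, where
`W(F,∇F) = (1/2)(Σᵢ kᵢ(div nᵢ)² + Σ_{i,j} k_{ij}(nᵢ·curl n_j)²)`. -/
theorem elastic_energy_reformulation (K : Fin 12 → ℝ) (hK : ∀ i, 0 < K i)
    (n : Fin 3 → (Fin 3 → ℝ) → Fin 3 → ℝ) (hsm : ∀ i, ContDiff ℝ 2 (n i))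
    (hF : IsFrame 3 n) (x : Fin 3 → ℝ) :
    fBi 3 K n x
      = (1/2) * (∑ i : Fin 3, γof K i *
            ∑ m : Fin 3, ∑ j : Fin 3, (pd 3 j (fun y => n i y m) x) ^ 2)
        + (1/2) * ((∑ i : Fin 3, kcof K i * (div3 3 (n i) x) ^ 2)
            + ∑ i : Fin 3, ∑ j : Fin 3,
                kkof K i j * (dot3 (n i x) (curl3 3 (n j) x)) ^ 2) := by
  have horth := fun i j => ((hF x).1) i j
  have H : ∀ i : Fin 3,
      ∑ m : Fin 3, ∑ j : Fin 3, (pd 3 j (fun y => n i y m) x) ^ 2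
        = (div3 3 (n i) x) ^ 2
          + (∑ j : Fin 3, (dot3 (n j x) (curl3 3 (n i) x)) ^ 2)
          + div3 3 (nullLag 3 (n i)) x := by
    intro i
    rw [key (n i) (hsm i) x, ← frame_sq n x horth (curl3 3 (n i) x)]
  simp only [fBi, H]
  simp only [Fin.sum_univ_three]
  simp only [γof, kcof, kkof, Matrix.cons_val_zero, Matrix.cons_val_one,
    Matrix.head_cons, Matrix.cons_val_two, Matrix.tail_cons]
  ring

end FrameHydro
end
end

section
/- Control of the Laplacian by its tangential projections (inequality (45)): Let d ∈ {2,3}. There exists a constant C > 0 such that for every smooth orthonormal frame field F : ℝ^d → SO(3) whose gradient, together with all derivatives occurring below, decays fast enough at infinity for all integrals to be finite: ‖ΔF‖²_{L²} ≤ (1/2)Σ_{k=1}^3 ‖ΔF·V_k‖²_{L²} + C ∫_{ℝ^d} |∇F|²(|∇²F| + |∇F|²) dx, where at each point x, ΔF·V_k denotes the Frobenius inner product of the matrix ΔF(x) = (Δn1, Δn2, Δn3)(x) with the matrix V_k evaluated at the frame F(x). -/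
open MeasureTheory Real Filter Set Matrix

noncomputable section
namespace FrameHydro

/-- The matrix `ΔF(x)` with columns `Δn₁, Δn₂, Δn₃`. -/
def lapF (d : ℕ) (n : Fin 3 → (Fin d → ℝ) → Fin 3 → ℝ) (x : Fin d → ℝ) : M3 :=
  Matrix.of fun p q => lap d (fun y => n q y p) x

/-- `|∇F|²` pointwise. -/
def gradFsq (d : ℕ) (n : Fin 3 → (Fin d → ℝ) → Fin 3 → ℝ) (x : Fin d → ℝ) : ℝ :=
  ∑ i : Fin 3, ∑ m : Fin 3, ∑ k : Fin d, (pdd d k (fun y => n i y m) x) ^ 2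

/-- `|∇²F|` pointwise. -/
def hessFn (d : ℕ) (n : Fin 3 → (Fin d → ℝ) → Fin 3 → ℝ) (x : Fin d → ℝ) : ℝ :=
  Real.sqrt (∑ i : Fin 3, ∑ m : Fin 3, ∑ k : Fin d, ∑ l : Fin d,
    (pdd d k (pdd d l (fun y => n i y m)) x) ^ 2)


section Aux

variable {d : ℕ}

lemma contDiff_pdd {f : (Fin d → ℝ) → ℝ} (k : Fin d) (hf : ContDiff ℝ (⊤ : ℕ∞) f) :
    ContDiff ℝ (⊤ : ℕ∞) (pdd d k f) :=
  (hf.fderiv_right (by simp)).clm_apply contDiff_const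

lemma pdd_const (k : Fin d) (c : ℝ) : pdd d k (fun _ => c) = fun _ => 0 := by
  funext x; simp [pdd]

lemma pdd_mul {f g : (Fin d → ℝ) → ℝ} {x : Fin d → ℝ} (k : Fin d)
    (hf : DifferentiableAt ℝ f x) (hg : DifferentiableAt ℝ g x) :
    pdd d k (fun y => f y * g y) x = f x * pdd d k g x + pdd d k f x * g x := by
  simp [pdd, fderiv_fun_mul hf hg]; ring

lemma pdd_add {f g : (Fin d → ℝ) → ℝ} {x : Fin d → ℝ} (k : Fin d)
    (hf : DifferentiableAt ℝ f x) (hg : DifferentiableAt ℝ g x) :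
    pdd d k (fun y => f y + g y) x = pdd d k f x + pdd d k g x := by
  simp [pdd, fderiv_fun_add hf hg]

lemma pdd_sum {ι : Type*} (s : Finset ι) {f : ι → (Fin d → ℝ) → ℝ} {x : Fin d → ℝ} (k : Fin d)
    (hf : ∀ i ∈ s, DifferentiableAt ℝ (f i) x) :
    pdd d k (fun y => ∑ i ∈ s, f i y) x = ∑ i ∈ s, pdd d k (f i) x := by
  simp [pdd, fderiv_fun_sum hf]

lemma frame_second (n : Fin 3 → (Fin d → ℝ) → Fin 3 → ℝ)
    (hn : ∀ i, ContDiff ℝ (⊤ : ℕ∞) (n i)) (hF : IsFrame d n) (p q : Fin 3) (x : Fin d → ℝ) :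
    (∑ m : Fin 3, n p x m * lap d (fun y => n q y m) x)
      + (∑ m : Fin 3, n q x m * lap d (fun y => n p y m) x)
      + 2 * ∑ k : Fin d, ∑ m : Fin 3,
          pdd d k (fun y => n p y m) x * pdd d k (fun y => n q y m) x = 0 := by
  have hc : ∀ i m, ContDiff ℝ (⊤ : ℕ∞) (fun y => n i y m) := fun i m => contDiff_pi.mp (hn i) m
  have hdm : ∀ i m (y : Fin d → ℝ), DifferentiableAt ℝ (fun y => n i y m) y :=
    fun i m y => ((hc i m).differentiable (by simp)) y
  have hdp : ∀ i m k (y : Fin d → ℝ), DifferentiableAt ℝ (pdd d k (fun y => n i y m)) y :=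
    fun i m k y => ((contDiff_pdd k (hc i m)).differentiable (by simp)) y
  have hkey : ∀ k : Fin d,
      ∑ m : Fin 3, (n p x m * pdd d k (pdd d k (fun y => n q y m)) x
        + pdd d k (pdd d k (fun y => n p y m)) x * n q x m
        + 2 * (pdd d k (fun y => n p y m) x * pdd d k (fun y => n q y m) x)) = 0 := by
    intro k
    have e0 : (fun y => ∑ m : Fin 3, n p y m * n q y m)
        = (fun _ : Fin d → ℝ => if p = q then (1:ℝ) else 0) :=
      funext fun y => (hF y).1 p q
    have e1 : pdd d k (fun y => ∑ m : Fin 3, n p y m * n q y m)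
        = fun y => ∑ m : Fin 3, (n p y m * pdd d k (fun z => n q z m) y
            + pdd d k (fun z => n p z m) y * n q y m) := by
      funext y
      rw [pdd_sum _ k (fun m _ => (hdm p m y).fun_mul (hdm q m y))]
      exact Finset.sum_congr rfl fun m _ => pdd_mul k (hdm p m y) (hdm q m y)
    have e2 : pdd d k (pdd d k (fun y => ∑ m : Fin 3, n p y m * n q y m)) x = 0 := by
      rw [e0, pdd_const, pdd_const]
    rw [e1] at e2
    rw [pdd_sum _ k
      (fun m _ => ((hdm p m x).fun_mul (hdp q m k x)).fun_add ((hdp p m k x).fun_mul (hdm q m x)))] at e2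
    rw [← e2]
    refine Finset.sum_congr rfl fun m _ => ?_
    rw [pdd_add k ((hdm p m x).fun_mul (hdp q m k x)) ((hdp p m k x).fun_mul (hdm q m x)),
        pdd_mul k (hdm p m x) (hdp q m k x), pdd_mul k (hdp p m k x) (hdm q m x)]
    ring
  have h1 : ∑ m : Fin 3, n p x m * lap d (fun y => n q y m) x
      = ∑ k : Fin d, ∑ m : Fin 3, n p x m * pdd d k (pdd d k (fun y => n q y m)) x := by
    simp only [lap, Finset.mul_sum]
    exact Finset.sum_comm
  have h2 : ∑ m : Fin 3, n q x m * lap d (fun y => n p y m) x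
      = ∑ k : Fin d, ∑ m : Fin 3, pdd d k (pdd d k (fun y => n p y m)) x * n q x m := by
    simp only [lap, Finset.mul_sum]
    rw [Finset.sum_comm]
    exact Finset.sum_congr rfl fun k _ => Finset.sum_congr rfl fun m _ => mul_comm _ _
  have h3 : 2 * ∑ k : Fin d, ∑ m : Fin 3,
        pdd d k (fun y => n p y m) x * pdd d k (fun y => n q y m) x
      = ∑ k : Fin d, ∑ m : Fin 3,
          2 * (pdd d k (fun y => n p y m) x * pdd d k (fun y => n q y m) x) := by
    simp [Finset.mul_sum]
  rw [h1, h2, h3]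
  simp only [← Finset.sum_add_distrib]
  exact Finset.sum_eq_zero fun k _ => hkey k

lemma cols_ortho (nv : Fin 3 → Fin 3 → ℝ)
    (h : ∀ i j, dot3 (nv i) (nv j) = if i = j then 1 else 0) (m l : Fin 3) :
    ∑ p : Fin 3, nv p m * nv p l = if m = l then (1:ℝ) else 0 := by
  have h1 : (Matrix.of fun p m => nv p m) * (Matrix.of fun p m => nv p m)ᵀ = 1 := by
    rw [← Matrix.ext_iff]
    intro i j
    simpa [Matrix.mul_apply, dot3, Matrix.one_apply] using h i j
  have h2 := mul_eq_one_comm.mp h1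
  rw [← Matrix.ext_iff] at h2
  simpa [Matrix.mul_apply, Matrix.one_apply] using h2 m l

lemma ortho_sq (nv : Fin 3 → Fin 3 → ℝ)
    (h : ∀ i j, dot3 (nv i) (nv j) = if i = j then 1 else 0) (v : Fin 3 → ℝ) :
    ∑ m : Fin 3, (v m) ^ 2 = ∑ p : Fin 3, (∑ m : Fin 3, nv p m * v m) ^ 2 := by
  have h00 := cols_ortho nv h 0 0
  have h11 := cols_ortho nv h 1 1
  have h22 := cols_ortho nv h 2 2
  have h01 := cols_ortho nv h 0 1
  have h02 := cols_ortho nv h 0 2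
  have h12 := cols_ortho nv h 1 2
  simp only [Fin.sum_univ_three] at h00 h11 h22 h01 h02 h12 ⊢
  norm_num [Fin.ext_iff] at h00 h11 h22 h01 h02 h12
  linear_combination (-(v 0)^2) * h00 + (-(v 1)^2) * h11 + (-(v 2)^2) * h22
    + (-2*(v 0)*(v 1))*h01 + (-2*(v 0)*(v 2))*h02 + (-2*(v 1)*(v 2))*h12

lemma pointwise_bound (n : Fin 3 → (Fin d → ℝ) → Fin 3 → ℝ)
    (hn : ∀ i, ContDiff ℝ (⊤ : ℕ∞) (n i)) (hF : IsFrame d n) (x : Fin d → ℝ) :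
    ∑ i : Fin 3, ∑ m : Fin 3, (lap d (fun y => n i y m) x) ^ 2
      ≤ (1/2) * ∑ k : Fin 3, (mdot (lapF d n x) (Vb (fun i => n i x) k)) ^ 2
        + 9 * (gradFsq d n x * (hessFn d n x + gradFsq d n x)) := by
  set b : Fin 3 → Fin 3 → ℝ :=
    fun p q => ∑ m : Fin 3, n p x m * lap d (fun y => n q y m) x with hb
  set S : Fin 3 → Fin 3 → ℝ :=
    fun p q => ∑ k : Fin d, ∑ m : Fin 3,
      pdd d k (fun y => n p y m) x * pdd d k (fun y => n q y m) x with hS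
  set g := gradFsq d n x with hgdef
  have key1 : ∀ q : Fin 3, ∑ m : Fin 3, (lap d (fun y => n q y m) x) ^ 2
      = ∑ p : Fin 3, (b p q) ^ 2 := by
    intro q
    simp only [hb]
    exact ortho_sq (fun i => n i x) (fun i j => (hF x).1 i j) _
  have key2 : ∀ p q, b p q + b q p + 2 * S p q = 0 := by
    intro p q
    simp only [hb, hS]
    exact frame_second n hn hF p q x
  have key3 : mdot (lapF d n x) (Vb (fun i => n i x) 0) = b 2 1 - b 1 2 := by
    simp only [hb]
    simp [mdot, Vb, mkCols, lapF, Fin.sum_univ_three]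
    ring
  have key4 : mdot (lapF d n x) (Vb (fun i => n i x) 1) = b 0 2 - b 2 0 := by
    simp only [hb]
    simp [mdot, Vb, mkCols, lapF, Fin.sum_univ_three]
    ring
  have key5 : mdot (lapF d n x) (Vb (fun i => n i x) 2) = b 1 0 - b 0 1 := by
    simp only [hb]
    simp [mdot, Vb, mkCols, lapF, Fin.sum_univ_three]
    ring
  have hSnn : ∀ p, 0 ≤ S p p := by
    intro p
    simp only [hS]
    exact Finset.sum_nonneg fun k _ => Finset.sum_nonneg fun m _ => mul_self_nonneg _
  have hgS : g = S 0 0 + S 1 1 + S 2 2 := by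
    have hSd : ∀ i : Fin 3, S i i = ∑ m : Fin 3, ∑ k : Fin d,
        (pdd d k (fun y => n i y m) x) ^ 2 := by
      intro i
      simp only [hS]
      rw [Finset.sum_comm]
      exact Finset.sum_congr rfl fun m _ => Finset.sum_congr rfl fun k _ => (sq _).symm
    rw [hgdef, hSd 0, hSd 1, hSd 2]
    simp [gradFsq, Fin.sum_univ_three]
  have hSle : ∀ p, S p p ≤ g := by
    intro p
    have hsum : ∑ r : Fin 3, S r r = S 0 0 + S 1 1 + S 2 2 := Fin.sum_univ_three _
    rw [hgS, ← hsum]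
    exact Finset.single_le_sum (fun r _ => hSnn r) (Finset.mem_univ p)
  have hgnn : 0 ≤ g := by
    rw [hgS]; have h0 := hSnn 0; have h1 := hSnn 1; have h2 := hSnn 2; linarith
  have hCS : ∀ p q, (S p q) ^ 2 ≤ g ^ 2 := by
    intro p q
    have e : ∀ a c : Fin 3, S a c = ∑ z : Fin d × Fin 3,
        pdd d z.1 (fun y => n a y z.2) x * pdd d z.1 (fun y => n c y z.2) x := by
      intro a c
      simp only [hS]
      exact (Fintype.sum_prod_type (fun z : Fin d × Fin 3 =>
        pdd d z.1 (fun y => n a y z.2) x * pdd d z.1 (fun y => n c y z.2) x)).symm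
    have h1 : (S p q) ^ 2 ≤ S p p * S q q := by
      rw [e p q, e p p, e q q]
      have := Finset.sum_mul_sq_le_sq_mul_sq Finset.univ
        (fun z : Fin d × Fin 3 => pdd d z.1 (fun y => n p y z.2) x)
        (fun z : Fin d × Fin 3 => pdd d z.1 (fun y => n q y z.2) x)
      simpa only [pow_two] using this
    calc (S p q) ^ 2 ≤ S p p * S q q := h1
      _ ≤ g * g := mul_le_mul (hSle p) (hSle q) (hSnn q) hgnn
      _ = g ^ 2 := (sq g).symm
  have hsq4 : ∀ u v : ℝ, u + 2 * v = 0 → u ^ 2 = 4 * v ^ 2 := by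
    intro u v huv
    have : u = -2 * v := by linarith
    rw [this]; ring
  have hb21 : (b 2 1 + b 1 2) ^ 2 ≤ 4 * g ^ 2 := by
    have h := hsq4 _ _ (key2 2 1)
    have := hCS 2 1; linarith
  have hb02 : (b 0 2 + b 2 0) ^ 2 ≤ 4 * g ^ 2 := by
    have h := hsq4 _ _ (key2 0 2)
    have := hCS 0 2; linarith
  have hb10 : (b 1 0 + b 0 1) ^ 2 ≤ 4 * g ^ 2 := by
    have h := hsq4 _ _ (key2 1 0)
    have := hCS 1 0; linarith
  have hdiag : ∀ p, (b p p) ^ 2 ≤ g ^ 2 := by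
    intro p
    have h := key2 p p
    have hb' : b p p = - S p p := by linarith
    have := hCS p p
    rw [hb']; rw [neg_pow]; simpa using this
  have hhn : 0 ≤ hessFn d n x := Real.sqrt_nonneg _
  have hgg : g ^ 2 ≤ g * (hessFn d n x + g) := by nlinarith
  calc ∑ i : Fin 3, ∑ m : Fin 3, (lap d (fun y => n i y m) x) ^ 2
      = ∑ q : Fin 3, ∑ p : Fin 3, (b p q) ^ 2 := Finset.sum_congr rfl fun q _ => key1 q
    _ = (1/2) * ((b 2 1 - b 1 2) ^ 2 + (b 0 2 - b 2 0) ^ 2 + (b 1 0 - b 0 1) ^ 2)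
          + (1/2) * ((b 2 1 + b 1 2) ^ 2 + (b 0 2 + b 2 0) ^ 2 + (b 1 0 + b 0 1) ^ 2)
          + ((b 0 0) ^ 2 + (b 1 1) ^ 2 + (b 2 2) ^ 2) := by
        simp only [Fin.sum_univ_three]; ring
    _ ≤ (1/2) * ((b 2 1 - b 1 2) ^ 2 + (b 0 2 - b 2 0) ^ 2 + (b 1 0 - b 0 1) ^ 2)
          + 9 * g ^ 2 := by
        have := hdiag 0; have := hdiag 1; have := hdiag 2
        linarith
    _ ≤ (1/2) * ∑ k : Fin 3, (mdot (lapF d n x) (Vb (fun i => n i x) k)) ^ 2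
          + 9 * (g * (hessFn d n x + g)) := by
        rw [Fin.sum_univ_three, key3, key4, key5]
        linarith

end Aux

/-- **Control of the Laplacian by its tangential projections (inequality (45))**: for
`d ∈ {2,3}` there is `C > 0` such that for every smooth orthonormal frame field with
sufficient decay,
`‖ΔF‖²_{L²} ≤ (1/2)Σ_k ‖ΔF·V_k‖²_{L²} + C ∫ |∇F|²(|∇²F| + |∇F|²)`. -/
theorem laplacian_tangential_control (d : ℕ) (hd : d = 2 ∨ d = 3) :
    ∃ C > (0 : ℝ), ∀ n : Fin 3 → (Fin d → ℝ) → Fin 3 → ℝ,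
      (∀ i, ContDiff ℝ (⊤ : ℕ∞) (n i)) → IsFrame d n →
      (∀ i m, MeasureTheory.MemLp (lap d (fun y => n i y m)) 2 MeasureTheory.volume) →
      (∀ k : Fin 3, MeasureTheory.MemLp
        (fun x => mdot (lapF d n x) (Vb (fun i => n i x) k)) 2 MeasureTheory.volume) →
      MeasureTheory.Integrable
        (fun x => gradFsq d n x * (hessFn d n x + gradFsq d n x)) MeasureTheory.volume →
      (∑ i : Fin 3, ∑ m : Fin 3, L2sq d (lap d (fun y => n i y m)))
        ≤ (1/2) * (∑ k : Fin 3, L2sq d (fun x => mdot (lapF d n x) (Vb (fun i => n i x) k)))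
          + C * ∫ x, gradFsq d n x * (hessFn d n x + gradFsq d n x) := by
  refine ⟨9, by norm_num, ?_⟩
  intro n hn hF hL2 hV2 hInt
  have hint1 : ∀ (i m : Fin 3),
      Integrable (fun x => (lap d (fun y => n i y m) x) ^ 2) volume :=
    fun i m => (hL2 i m).integrable_sq
  have hint2 : ∀ k : Fin 3,
      Integrable (fun x => (mdot (lapF d n x) (Vb (fun i => n i x) k)) ^ 2) volume :=
    fun k => (hV2 k).integrable_sq
  have hΦint : Integrable
      (fun x => ∑ i : Fin 3, ∑ m : Fin 3, (lap d (fun y => n i y m) x) ^ 2) volume :=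
    integrable_finset_sum _ fun i _ => integrable_finset_sum _ fun m _ => hint1 i m
  have hΨint : Integrable (fun x =>
      (1/2) * ∑ k : Fin 3, (mdot (lapF d n x) (Vb (fun i => n i x) k)) ^ 2
        + 9 * (gradFsq d n x * (hessFn d n x + gradFsq d n x))) volume :=
    ((integrable_finset_sum _ fun k _ => hint2 k).const_mul _).add (hInt.const_mul _)
  have h1 : (∑ i : Fin 3, ∑ m : Fin 3, L2sq d (lap d (fun y => n i y m)))
      = ∫ x, ∑ i : Fin 3, ∑ m : Fin 3, (lap d (fun y => n i y m) x) ^ 2 := by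
    rw [integral_finset_sum _ fun i _ => integrable_finset_sum _ fun m _ => hint1 i m]
    exact Finset.sum_congr rfl fun i _ =>
      (integral_finset_sum _ fun m _ => hint1 i m).symm
  have h2 : (∫ x, ((1/2) * ∑ k : Fin 3, (mdot (lapF d n x) (Vb (fun i => n i x) k)) ^ 2
        + 9 * (gradFsq d n x * (hessFn d n x + gradFsq d n x))))
      = (1/2) * (∑ k : Fin 3, L2sq d (fun x => mdot (lapF d n x) (Vb (fun i => n i x) k)))
        + 9 * ∫ x, gradFsq d n x * (hessFn d n x + gradFsq d n x) := by
    rw [integral_add ((integrable_finset_sum _ fun k _ => hint2 k).const_mul _)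
        (hInt.const_mul _), integral_const_mul, integral_const_mul,
        integral_finset_sum _ fun k _ => hint2 k]
    rfl
  rw [h1, ← h2]
  exact integral_mono hΦint hΨint fun x => pointwise_bound n hn hF x

end FrameHydro
end
end
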